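/- arXiv:cs/9906021 — 9 statements merged into one kernel-verified Lean document; each statement's English description precedes it below -/
import Mathlib

section
/- A finite set T of cells in an m×n grid is an hv-convex polyomino if and only if its complement (within the grid) can be written as the union of four pairwise disjoint corner regions A, B, C, D (upper-left, upper-right, lower-left, lower-right, respectively) such that (i) (i-1,j-1) ∈ A implies (i,j) ∉ D, and (ii) (i-1,j+1) ∈ B implies (i,j) ∉ C. -/
/-- The m×n grid of cells (i,j), 1 ≤ i ≤ m, 1 ≤ j ≤ n. -/
def grid (m n : ℕ) : Finset (ℕ × ℕ) := Finset.Icc 1 m ×ˢ Finset.Icc 1 n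

/-- Number of cells of T in row i (columns 1..n). -/
def rowsum (n : ℕ) (T : Finset (ℕ × ℕ)) (i : ℕ) : ℕ :=
  ((Finset.Icc 1 n).filter (fun j => (i, j) ∈ T)).card

/-- Number of cells of T in column j (rows 1..m). -/
def colsum (m : ℕ) (T : Finset (ℕ × ℕ)) (j : ℕ) : ℕ :=
  ((Finset.Icc 1 m).filter (fun i => (i, j) ∈ T)).card

/-- Horizontally convex: cells in each row are consecutive. -/
def HConvex (T : Finset (ℕ × ℕ)) : Prop :=
  ∀ i k l j, (i, k) ∈ T → (i, l) ∈ T → k ≤ j → j ≤ l → (i, j) ∈ T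

/-- Vertically convex: cells in each column are consecutive. -/
def VConvex (T : Finset (ℕ × ℕ)) : Prop :=
  ∀ j k l i, (k, j) ∈ T → (l, j) ∈ T → k ≤ i → i ≤ l → (i, j) ∈ T

/-- 4-adjacency of distinct cells: |i-i'| + |j-j'| ≤ 1. -/
def Adj (a b : ℕ × ℕ) : Prop :=
  (a.1 = b.1 ∧ (a.2 = b.2 + 1 ∨ b.2 = a.2 + 1)) ∨
  (a.2 = b.2 ∧ (a.1 = b.1 + 1 ∨ b.1 = a.1 + 1))

/-- T is connected under 4-adjacency. -/
def ConnectedIn (T : Finset (ℕ × ℕ)) : Prop :=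
  ∀ a ∈ T, ∀ b ∈ T,
    Relation.ReflTransGen (fun x y => x ∈ T ∧ y ∈ T ∧ Adj x y) a b

/-- A polyomino is a nonempty 4-connected set of cells. -/
def Polyomino (T : Finset (ℕ × ℕ)) : Prop := T.Nonempty ∧ ConnectedIn T

/-- An hv-convex polyomino in the m×n grid. -/
def HvConvexPolyomino (m n : ℕ) (T : Finset (ℕ × ℕ)) : Prop :=
  T ⊆ grid m n ∧ HConvex T ∧ VConvex T ∧ Polyomino T

/-- Upper-left corner region: closed under moving up and left within the grid. -/
def ULCorner (m n : ℕ) (A : Finset (ℕ × ℕ)) : Prop :=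
  A ⊆ grid m n ∧
  ∀ i j, (i, j) ∈ A → (2 ≤ i → (i - 1, j) ∈ A) ∧ (2 ≤ j → (i, j - 1) ∈ A)

/-- Upper-right corner region: closed under moving up and right within the grid. -/
def URCorner (m n : ℕ) (B : Finset (ℕ × ℕ)) : Prop :=
  B ⊆ grid m n ∧
  ∀ i j, (i, j) ∈ B → (2 ≤ i → (i - 1, j) ∈ B) ∧ (j + 1 ≤ n → (i, j + 1) ∈ B)

/-- Lower-left corner region: closed under moving down and left within the grid. -/
def LLCorner (m n : ℕ) (C : Finset (ℕ × ℕ)) : Prop :=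
  C ⊆ grid m n ∧
  ∀ i j, (i, j) ∈ C → (i + 1 ≤ m → (i + 1, j) ∈ C) ∧ (2 ≤ j → (i, j - 1) ∈ C)

/-- Lower-right corner region: closed under moving down and right within the grid. -/
def LRCorner (m n : ℕ) (D : Finset (ℕ × ℕ)) : Prop :=
  D ⊆ grid m n ∧
  ∀ i j, (i, j) ∈ D → (i + 1 ≤ m → (i + 1, j) ∈ D) ∧ (j + 1 ≤ n → (i, j + 1) ∈ D)

/-- The complement of T in the grid decomposes as four pairwise disjoint corner
regions A, B, C, D satisfying the two diagonal conditions: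
(i) (i-1,j-1) ∈ A → (i,j) ∉ D, stated as (i,j) ∈ A → (i+1,j+1) ∉ D, and
(ii) (i-1,j+1) ∈ B → (i,j) ∉ C, stated as (i,j+1) ∈ B → (i+1,j) ∉ C. -/
def CornerDecomp (m n : ℕ) (T A B C D : Finset (ℕ × ℕ)) : Prop :=
  ULCorner m n A ∧ URCorner m n B ∧ LLCorner m n C ∧ LRCorner m n D ∧
  Disjoint A B ∧ Disjoint A C ∧ Disjoint A D ∧
  Disjoint B C ∧ Disjoint B D ∧ Disjoint C D ∧
  grid m n \ T = A ∪ B ∪ C ∪ D ∧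
  (∀ i j, (i, j) ∈ A → (i + 1, j + 1) ∉ D) ∧
  (∀ i j, (i, j + 1) ∈ B → (i + 1, j) ∉ C)

/-!
Row by row, an hv-convex polyomino `T` occupies an interval of rows `[p, q]`, row `i` being an
interval `[l i, r i]` of columns, and consecutive rows overlap. By connectivity, `l` decreases and
then increases, and `r` increases and then decreases: a strict interior maximum of `l` (or minimum
of `r`) would leave a cell outside `T` with cells of `T` in all four closed quadrants around it,
and a path of `T` from one quadrant to the opposite one would have to cross the row or the column
of that cell on the wrong side, contradicting hv-convexity. Cutting the complement along `p`, `q`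
and the rows where `l` is minimal and `r` maximal gives the four corner regions.

Conversely, a cell missing between two cells of `T` in a row or column would lie in a corner region
containing one of them. For connectivity, from a cell of `T` one can always step down or sideways
towards any lower cell of `T`; the two diagonal conditions rule out exactly the configuration in
which the step down is blocked by one region and the step sideways by the next.
-/

open Finset

lemma mem_grid {m n i j : ℕ} : (i, j) ∈ grid m n ↔ 1 ≤ i ∧ i ≤ m ∧ 1 ≤ j ∧ j ≤ n := by
  simp [grid, and_assoc]

lemma Adj.symm {a b : ℕ × ℕ} (h : Adj a b) : Adj b a := by
  unfold Adj at *; omega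

theorem Relation.ReflTransGen.exists_crossing {α : Type*} {r : α → α → Prop} {P : α → Prop}
    {a b : α} (h : Relation.ReflTransGen r a b) (ha : ¬P a) (hb : P b) :
    ∃ x y, r x y ∧ ¬P x ∧ P y := by
  induction h with
  | refl => exact absurd hb ha
  | @tail c d _ hcd ih =>
    by_cases hc : P c
    · exact ih hc
    · exact ⟨c, d, hcd, hc, hb⟩

theorem antitoneOn_monotoneOn_of_isMinOn {α : Type*} [LinearOrder α] {f : ℕ → α} {p q c : ℕ}
    (hf : ∀ a b d, p ≤ a → a < b → b < d → d ≤ q → f b ≤ f a ∨ f b ≤ f d)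
    (hc : c ∈ Set.Icc p q) (hmin : IsMinOn f (Set.Icc p q) c) :
    AntitoneOn f (Set.Icc p c) ∧ MonotoneOn f (Set.Icc c q) := by
  rw [isMinOn_iff] at hmin
  constructor
  · intro a ha b hb hab
    have hca : f c ≤ f a := hmin a ⟨ha.1, ha.2.trans hc.2⟩
    rcases hab.eq_or_lt with rfl | hab
    · exact le_rfl
    rcases hb.2.eq_or_lt with rfl | hbc
    · exact hca
    exact (hf a b c ha.1 hab hbc hc.2).elim id hca.trans'
  · intro a ha b hb hab
    have hcb : f c ≤ f b := hmin b ⟨hc.1.trans hb.1, hb.2⟩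
    rcases hab.eq_or_lt with rfl | hab
    · exact le_rfl
    rcases ha.1.eq_or_lt with rfl | hca
    · exact hcb
    exact (hf c a b hc.1 hca hab hb.2).elim hcb.trans' id

namespace ConnectedIn

variable {T : Finset (ℕ × ℕ)}

theorem exists_adj_crossing (hC : ConnectedIn T) (P : ℕ × ℕ → Prop) {a b : ℕ × ℕ}
    (ha : a ∈ T) (hb : b ∈ T) (hPa : ¬P a) (hPb : P b) :
    ∃ x ∈ T, ∃ y ∈ T, Adj x y ∧ ¬P x ∧ P y := by
  obtain ⟨x, y, ⟨hx, hy, hxy⟩, hPx, hPy⟩ := (hC a ha b hb).exists_crossing hPa hPb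
  exact ⟨x, hx, y, hy, hxy, hPx, hPy⟩

theorem exists_vertical_adj (hC : ConnectedIn T) {a b : ℕ × ℕ} {i : ℕ} (ha : a ∈ T) (hb : b ∈ T)
    (hai : a.1 ≤ i) (hib : i < b.1) : ∃ j, (i, j) ∈ T ∧ (i + 1, j) ∈ T := by
  obtain ⟨⟨x₁, x₂⟩, hx, ⟨y₁, y₂⟩, hy, hxy, hPx, hPy⟩ :=
    hC.exists_adj_crossing (fun c => i < c.1) ha hb (by omega) hib
  obtain ⟨rfl, rfl, rfl⟩ : i = x₁ ∧ y₁ = i + 1 ∧ y₂ = x₂ := by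
    unfold Adj at hxy; simp only at hxy hPx hPy; omega
  exact ⟨_, hx, hy⟩

theorem exists_mem_row (hC : ConnectedIn T) {a b : ℕ × ℕ} {i : ℕ} (ha : a ∈ T) (hb : b ∈ T)
    (hai : a.1 ≤ i) (hib : i ≤ b.1) : ∃ j, (i, j) ∈ T := by
  rcases hib.lt_or_eq with hib | rfl
  · obtain ⟨j, hj, -⟩ := hC.exists_vertical_adj ha hb hai hib
    exact ⟨j, hj⟩
  · exact ⟨b.2, hb⟩

end ConnectedIn

section Convex

variable {T : Finset (ℕ × ℕ)}

theorem HConvex.row_side (hH : HConvex T) {i j : ℕ} (hij : (i, j) ∉ T) :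
    (∀ y ∈ T, y.1 = i → y.2 < j) ∨ (∀ y ∈ T, y.1 = i → j < y.2) := by
  by_contra! ⟨⟨⟨y₁, y₂⟩, hy, rfl, hyj⟩, ⟨⟨z₁, z₂⟩, hz, rfl, hzj⟩⟩
  exact hij (hH _ _ _ _ hz hy hzj hyj)

theorem VConvex.col_side (hV : VConvex T) {i j : ℕ} (hij : (i, j) ∉ T) :
    (∀ y ∈ T, y.2 = j → y.1 < i) ∨ (∀ y ∈ T, y.2 = j → i < y.1) := by
  by_contra! ⟨⟨⟨y₁, y₂⟩, hy, rfl, hyi⟩, ⟨⟨z₁, z₂⟩, hz, rfl, hzi⟩⟩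
  exact hij (hV _ _ _ _ hz hy hzi hyi)

theorem mem_of_quadrants (hH : HConvex T) (hV : VConvex T) (hC : ConnectedIn T) {i j : ℕ}
    (hUL : ∃ x ∈ T, x.1 ≤ i ∧ x.2 ≤ j) (hUR : ∃ x ∈ T, x.1 ≤ i ∧ j ≤ x.2)
    (hLL : ∃ x ∈ T, i ≤ x.1 ∧ x.2 ≤ j) (hLR : ∃ x ∈ T, i ≤ x.1 ∧ j ≤ x.2) : (i, j) ∈ T := by
  by_contra hij
  -- a path of `T` can only enter a closed quadrant at `(i, j)` through one of its boundary rays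
  have trapped : ∀ Q : ℕ × ℕ → Prop, (∀ x y, Adj x y → ¬Q x → Q y → y.1 = i ∨ y.2 = j) →
      (∀ y ∈ T, Q y → y.1 ≠ i ∧ y.2 ≠ j) → ∀ a ∈ T, ∀ b ∈ T, Q b → Q a := by
    intro Q hQ hfree a ha b hb hQb
    by_contra hQa
    obtain ⟨x, -, y, hy, hxy, hQx, hQy⟩ := hC.exists_adj_crossing Q ha hb hQa hQb
    have := hQ x y hxy hQx hQy
    have := hfree y hy hQy
    omega
  obtain ⟨a, ha, ha₁, ha₂⟩ := hUL
  obtain ⟨b, hb, hb₁, hb₂⟩ := hUR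
  obtain ⟨c, hc, hc₁, hc₂⟩ := hLL
  obtain ⟨d, hd, hd₁, hd₂⟩ := hLR
  rcases hH.row_side hij with hr | hr <;> rcases hV.col_side hij with hv | hv
  · have := trapped (fun x => i ≤ x.1 ∧ j ≤ x.2) (by unfold Adj; omega)
      (fun y hy _ => by have := hr y hy; have := hv y hy; omega) a ha d hd ⟨hd₁, hd₂⟩
    have := hr a ha; omega
  · have := trapped (fun x => x.1 ≤ i ∧ j ≤ x.2) (by unfold Adj; omega)
      (fun y hy _ => by have := hr y hy; have := hv y hy; omega) c hc b hb ⟨hb₁, hb₂⟩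
    have := hr c hc; omega
  · have := trapped (fun x => i ≤ x.1 ∧ x.2 ≤ j) (by unfold Adj; omega)
      (fun y hy _ => by have := hr y hy; have := hv y hy; omega) b hb c hc ⟨hc₁, hc₂⟩
    have := hr b hb; omega
  · have := trapped (fun x => x.1 ≤ i ∧ x.2 ≤ j) (by unfold Adj; omega)
      (fun y hy _ => by have := hr y hy; have := hv y hy; omega) d hd a ha ⟨ha₁, ha₂⟩
    have := hr d hd; omega

end Convex

section RowExtent

variable {T : Finset (ℕ × ℕ)} {i j : ℕ}

noncomputable def rowMin (T : Finset (ℕ × ℕ)) (i : ℕ) : ℕ := sInf {j | (i, j) ∈ T}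

noncomputable def rowMax (T : Finset (ℕ × ℕ)) (i : ℕ) : ℕ := sSup {j | (i, j) ∈ T}

theorem bddAbove_row (T : Finset (ℕ × ℕ)) (i : ℕ) : BddAbove {j | (i, j) ∈ T} :=
  (T.image Prod.snd).bddAbove.mono fun _ hj => mem_image_of_mem Prod.snd hj

theorem rowMin_le (h : (i, j) ∈ T) : rowMin T i ≤ j := Nat.sInf_le h

theorem le_rowMax (h : (i, j) ∈ T) : j ≤ rowMax T i := le_csSup (bddAbove_row T i) h

theorem rowMin_mem (h : (i, j) ∈ T) : (i, rowMin T i) ∈ T :=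
  Nat.sInf_mem (s := {j | (i, j) ∈ T}) ⟨j, h⟩

theorem rowMax_mem (h : (i, j) ∈ T) : (i, rowMax T i) ∈ T :=
  Nat.sSup_mem (s := {j | (i, j) ∈ T}) ⟨j, h⟩ (bddAbove_row T i)

theorem HConvex.mem_iff (hH : HConvex T) {k : ℕ} (hk : (i, k) ∈ T) :
    (i, j) ∈ T ↔ rowMin T i ≤ j ∧ j ≤ rowMax T i :=
  ⟨fun h => ⟨rowMin_le h, le_rowMax h⟩,
    fun h => hH i _ _ j (rowMin_mem hk) (rowMax_mem hk) h.1 h.2⟩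

theorem ConnectedIn.adjacent_rows_overlap (hC : ConnectedIn T) {a b : ℕ} (ha : (i, a) ∈ T)
    (hb : (i + 1, b) ∈ T) :
    rowMin T (i + 1) ≤ rowMax T i ∧ rowMin T i ≤ rowMax T (i + 1) := by
  obtain ⟨g, hg, hg'⟩ := hC.exists_vertical_adj ha hb le_rfl (Nat.lt_succ_self i)
  exact ⟨(rowMin_le hg').trans (le_rowMax hg), (rowMin_le hg).trans (le_rowMax hg')⟩

variable {a b d : ℕ}

theorem rowMin_le_or_le (hH : HConvex T) (hV : VConvex T) (hC : ConnectedIn T)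
    (ha : ∃ x, (a, x) ∈ T) (hb : ∃ y, (b, y) ∈ T) (hd : ∃ z, (d, z) ∈ T) (hab : a < b)
    (hbd : b < d) : rowMin T b ≤ rowMin T a ∨ rowMin T b ≤ rowMin T d := by
  obtain ⟨_, ha⟩ := ha; obtain ⟨_, hb⟩ := hb; obtain ⟨_, hd⟩ := hd
  by_contra! ⟨hba, hbd'⟩
  have hmem := mem_of_quadrants hH hV hC (i := b) (j := rowMin T b - 1)
    ⟨_, rowMin_mem ha, hab.le, by simp only; omega⟩ ⟨_, rowMin_mem hb, le_rfl, by simp only; omega⟩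
    ⟨_, rowMin_mem hd, hbd.le, by simp only; omega⟩ ⟨_, rowMin_mem hb, le_rfl, by simp only; omega⟩
  have := rowMin_le hmem
  omega

theorem le_rowMax_or_le (hH : HConvex T) (hV : VConvex T) (hC : ConnectedIn T)
    (ha : ∃ x, (a, x) ∈ T) (hb : ∃ y, (b, y) ∈ T) (hd : ∃ z, (d, z) ∈ T) (hab : a < b)
    (hbd : b < d) : rowMax T a ≤ rowMax T b ∨ rowMax T d ≤ rowMax T b := by
  obtain ⟨_, ha⟩ := ha; obtain ⟨_, hb⟩ := hb; obtain ⟨_, hd⟩ := hd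
  by_contra! ⟨hba, hbd'⟩
  have hmem := mem_of_quadrants hH hV hC (i := b) (j := rowMax T b + 1)
    ⟨_, rowMax_mem hb, le_rfl, by simp only; omega⟩ ⟨_, rowMax_mem ha, hab.le, by simp only; omega⟩
    ⟨_, rowMax_mem hb, le_rfl, by simp only; omega⟩ ⟨_, rowMax_mem hd, hbd.le, by simp only; omega⟩
  have := le_rowMax hmem
  omega

end RowExtent

structure IsConvexProfile (m n : ℕ) (T : Finset (ℕ × ℕ)) (p q lam sig : ℕ) (l r : ℕ → ℕ) :
    Prop where
  subset_grid : T ⊆ grid m n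
  mem_iff : ∀ i j, (i, j) ∈ T ↔ p ≤ i ∧ i ≤ q ∧ l i ≤ j ∧ j ≤ r i
  l_le_r : ∀ i, p ≤ i → i ≤ q → l i ≤ r i
  lam_mem : lam ∈ Set.Icc p q
  sig_mem : sig ∈ Set.Icc p q
  antitoneOn_l : AntitoneOn l (Set.Icc p lam)
  monotoneOn_l : MonotoneOn l (Set.Icc lam q)
  monotoneOn_r : MonotoneOn r (Set.Icc p sig)
  antitoneOn_r : AntitoneOn r (Set.Icc sig q)
  overlap : ∀ i, p ≤ i → i < q → l (i + 1) ≤ r i ∧ l i ≤ r (i + 1)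

def ulRegion (m n p lam : ℕ) (l r : ℕ → ℕ) : Finset (ℕ × ℕ) :=
  (grid m n).filter fun x => (x.1 < p ∧ x.2 ≤ r p) ∨ (p ≤ x.1 ∧ x.1 < lam ∧ x.2 < l x.1)

def urRegion (m n p sig : ℕ) (r : ℕ → ℕ) : Finset (ℕ × ℕ) :=
  (grid m n).filter fun x => (x.1 < p ∧ r p < x.2) ∨ (p ≤ x.1 ∧ x.1 ≤ sig ∧ r x.1 < x.2)

def llRegion (m n q lam : ℕ) (l : ℕ → ℕ) : Finset (ℕ × ℕ) :=
  (grid m n).filter fun x => (q < x.1 ∧ x.2 < l q) ∨ (lam ≤ x.1 ∧ x.1 ≤ q ∧ x.2 < l x.1)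

def lrRegion (m n q sig : ℕ) (l r : ℕ → ℕ) : Finset (ℕ × ℕ) :=
  (grid m n).filter fun x => (q < x.1 ∧ l q ≤ x.2) ∨ (sig < x.1 ∧ x.1 ≤ q ∧ r x.1 < x.2)

namespace IsConvexProfile

variable {m n p q lam sig : ℕ} {l r : ℕ → ℕ} {T : Finset (ℕ × ℕ)}

theorem bounds (h : IsConvexProfile m n T p q lam sig l r) (i : ℕ) (hpi : p ≤ i) (hiq : i ≤ q) :
    1 ≤ i ∧ i ≤ m ∧ 1 ≤ l i ∧ l i ≤ r i ∧ r i ≤ n := by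
  have hlr := h.l_le_r i hpi hiq
  have hl := mem_grid.1 (h.subset_grid ((h.mem_iff i (l i)).2 ⟨hpi, hiq, le_rfl, hlr⟩))
  have hr := mem_grid.1 (h.subset_grid ((h.mem_iff i (r i)).2 ⟨hpi, hiq, hlr, le_rfl⟩))
  exact ⟨hl.1, hl.2.1, hl.2.2.1, hlr, hr.2.2.2⟩

theorem ulCorner (h : IsConvexProfile m n T p q lam sig l r) :
    ULCorner m n (ulRegion m n p lam l r) := by
  refine ⟨filter_subset _ _, fun i j hx => ?_⟩
  simp only [ulRegion, mem_filter, mem_grid] at hx ⊢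
  have := h.bounds p; have := h.lam_mem.1; have := h.lam_mem.2
  have hstep : p < i → i < lam → l i ≤ l (i - 1) := fun h₁ h₂ =>
    h.antitoneOn_l ⟨by omega, by omega⟩ ⟨by omega, by omega⟩ (by omega)
  grind

theorem urCorner (h : IsConvexProfile m n T p q lam sig l r) :
    URCorner m n (urRegion m n p sig r) := by
  refine ⟨filter_subset _ _, fun i j hx => ?_⟩
  simp only [urRegion, mem_filter, mem_grid] at hx ⊢
  have := h.sig_mem.1; have := h.sig_mem.2
  have hstep : p < i → i ≤ sig → r (i - 1) ≤ r i := fun h₁ h₂ =>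
    h.monotoneOn_r ⟨by omega, by omega⟩ ⟨by omega, by omega⟩ (by omega)
  grind

theorem llCorner (h : IsConvexProfile m n T p q lam sig l r) :
    LLCorner m n (llRegion m n q lam l) := by
  refine ⟨filter_subset _ _, fun i j hx => ?_⟩
  simp only [llRegion, mem_filter, mem_grid] at hx ⊢
  have := h.lam_mem.1; have := h.lam_mem.2
  have hstep : lam ≤ i → i < q → l i ≤ l (i + 1) := fun h₁ h₂ =>
    h.monotoneOn_l ⟨by omega, by omega⟩ ⟨by omega, by omega⟩ (by omega)
  grind

theorem lrCorner (h : IsConvexProfile m n T p q lam sig l r) :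
    LRCorner m n (lrRegion m n q sig l r) := by
  refine ⟨filter_subset _ _, fun i j hx => ?_⟩
  simp only [lrRegion, mem_filter, mem_grid] at hx ⊢
  have := h.bounds q; have := h.sig_mem.1; have := h.sig_mem.2
  have hstep : sig ≤ i → i < q → r (i + 1) ≤ r i := fun h₁ h₂ =>
    h.antitoneOn_r ⟨by omega, by omega⟩ ⟨by omega, by omega⟩ (by omega)
  grind

theorem sdiff_eq (h : IsConvexProfile m n T p q lam sig l r) :
    grid m n \ T = ulRegion m n p lam l r ∪ urRegion m n p sig r ∪ llRegion m n q lam l ∪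
      lrRegion m n q sig l r := by
  ext ⟨i, j⟩
  simp only [ulRegion, urRegion, llRegion, lrRegion, mem_sdiff, mem_union, mem_filter,
    h.mem_iff]
  have := h.bounds i; have := h.lam_mem.1; have := h.lam_mem.2; have := h.sig_mem.2
  grind

theorem cornerDecomp (h : IsConvexProfile m n T p q lam sig l r) :
    CornerDecomp m n T (ulRegion m n p lam l r) (urRegion m n p sig r) (llRegion m n q lam l)
      (lrRegion m n q sig l r) := by
  obtain ⟨hpl, hlq⟩ := h.lam_mem
  obtain ⟨hps, hsq⟩ := h.sig_mem
  refine ⟨h.ulCorner, h.urCorner, h.llCorner, h.lrCorner, ?_, ?_, ?_, ?_, ?_, ?_, h.sdiff_eq,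
    fun i j hA hD => ?_, fun i j hB hC => ?_⟩
  rotate_left 6
  · simp only [ulRegion, lrRegion, mem_filter] at hA hD
    have := h.overlap i
    grind
  · simp only [urRegion, llRegion, mem_filter] at hB hC
    have := h.overlap i; have := h.l_le_r p; have := h.l_le_r i
    grind
  all_goals
    rw [disjoint_left]
    rintro ⟨i, j⟩ h₁ h₂
    simp only [ulRegion, urRegion, llRegion, lrRegion, mem_filter] at h₁ h₂
    have := h.l_le_r i
    grind

end IsConvexProfile

theorem HConvex.exists_isConvexProfile {m n : ℕ} {T : Finset (ℕ × ℕ)} (hT : T ⊆ grid m n)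
    (hne : T.Nonempty) (hH : HConvex T) (hV : VConvex T) (hC : ConnectedIn T) :
    ∃ p q lam sig, IsConvexProfile m n T p q lam sig (rowMin T) (rowMax T) := by
  set rows := T.image Prod.fst
  have hrows : rows.Nonempty := hne.image _
  obtain ⟨a, ha, hap⟩ := mem_image.1 (rows.min'_mem hrows)
  obtain ⟨b, hb, hbq⟩ := mem_image.1 (rows.max'_mem hrows)
  set p := rows.min' hrows
  set q := rows.max' hrows
  have hrow : ∀ i, (∃ j, (i, j) ∈ T) ↔ p ≤ i ∧ i ≤ q := fun i =>
    ⟨fun ⟨_, hj⟩ => ⟨rows.min'_le _ (mem_image_of_mem Prod.fst hj),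
      rows.le_max' _ (mem_image_of_mem Prod.fst hj)⟩,
    fun hi => hC.exists_mem_row ha hb (hap ▸ hi.1) (hbq ▸ hi.2)⟩
  have hIcc : (Icc p q).Nonempty := ⟨a.1, mem_Icc.2 ((hrow a.1).1 ⟨a.2, ha⟩)⟩
  obtain ⟨lam, hlam, hlam_min⟩ := exists_min_image (Icc p q) (rowMin T) hIcc
  obtain ⟨sig, hsig, hsig_max⟩ := exists_max_image (Icc p q) (rowMax T) hIcc
  have cell : ∀ i, p ≤ i → i ≤ q → ∃ j, (i, j) ∈ T := fun i h₁ h₂ => (hrow i).2 ⟨h₁, h₂⟩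
  have hl := antitoneOn_monotoneOn_of_isMinOn (f := rowMin T)
    (fun a b d hpa hab hbd hdq => rowMin_le_or_le hH hV hC (cell a hpa (by omega))
      (cell b (by omega) (by omega)) (cell d (by omega) hdq) hab hbd)
    (mem_Icc.1 hlam) (isMinOn_iff.2 fun k hk => hlam_min k (mem_Icc.2 hk))
  have hr := antitoneOn_monotoneOn_of_isMinOn (f := OrderDual.toDual ∘ rowMax T)
    (fun a b d hpa hab hbd hdq => le_rowMax_or_le hH hV hC (cell a hpa (by omega))
      (cell b (by omega) (by omega)) (cell d (by omega) hdq) hab hbd)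
    (mem_Icc.1 hsig) (isMinOn_iff.2 fun k hk => hsig_max k (mem_Icc.2 hk))
  refine ⟨p, q, lam, sig, hT, fun i j => ⟨fun hj => ?_, fun ⟨h₁, h₂, hij⟩ => ?_⟩,
    fun i h₁ h₂ => ?_, mem_Icc.1 hlam, mem_Icc.1 hsig, hl.1, hl.2,
    antitoneOn_toDual_comp_iff.1 hr.1, monotoneOn_toDual_comp_iff.1 hr.2, fun i h₁ h₂ => ?_⟩
  · exact ⟨((hrow i).1 ⟨j, hj⟩).1, ((hrow i).1 ⟨j, hj⟩).2, rowMin_le hj, le_rowMax hj⟩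
  · obtain ⟨_, hk⟩ := cell i h₁ h₂
    exact (hH.mem_iff hk).2 hij
  · obtain ⟨_, hk⟩ := cell i h₁ h₂
    exact (rowMin_le hk).trans (le_rowMax hk)
  · obtain ⟨_, hi⟩ := cell i h₁ h₂.le
    obtain ⟨_, hi'⟩ := cell (i + 1) (by omega) h₂
    exact hC.adjacent_rows_overlap hi hi'

theorem Nat.of_pred_closed {P : ℕ → Prop} (h : ∀ i, 2 ≤ i → P i → P (i - 1)) {i k : ℕ} (hk : 1 ≤ k)
    (hki : k ≤ i) (hi : P i) : P k := by
  induction i, hki using Nat.le_induction with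
  | base => exact hi
  | succ i hki ih => exact ih (by simpa using h (i + 1) (by omega) hi)

theorem Nat.of_succ_closed {P : ℕ → Prop} {m : ℕ} (h : ∀ i, i + 1 ≤ m → P i → P (i + 1)) {i k : ℕ}
    (hik : i ≤ k) (hkm : k ≤ m) (hi : P i) : P k := by
  induction k, hik using Nat.le_induction with
  | base => exact hi
  | succ k hik ih => exact h k hkm (ih (by omega))

section Corners

variable {m n i j k l : ℕ} {A : Finset (ℕ × ℕ)}

theorem ULCorner.mem_of_le (hA : ULCorner m n A) (h : (i, j) ∈ A) (hk : 1 ≤ k) (hki : k ≤ i)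
    (hl : 1 ≤ l) (hlj : l ≤ j) : (k, l) ∈ A :=
  Nat.of_pred_closed (P := fun l => (k, l) ∈ A) (fun l hl h => (hA.2 k l h).2 hl) hl hlj
    (Nat.of_pred_closed (P := fun k => (k, j) ∈ A) (fun k hk h => (hA.2 k j h).1 hk) hk hki h)

theorem URCorner.mem_of_le (hA : URCorner m n A) (h : (i, j) ∈ A) (hk : 1 ≤ k) (hki : k ≤ i)
    (hjl : j ≤ l) (hln : l ≤ n) : (k, l) ∈ A :=
  Nat.of_succ_closed (P := fun l => (k, l) ∈ A) (fun l hl h => (hA.2 k l h).2 hl) hjl hln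
    (Nat.of_pred_closed (P := fun k => (k, j) ∈ A) (fun k hk h => (hA.2 k j h).1 hk) hk hki h)

theorem LLCorner.mem_of_le (hA : LLCorner m n A) (h : (i, j) ∈ A) (hik : i ≤ k) (hkm : k ≤ m)
    (hl : 1 ≤ l) (hlj : l ≤ j) : (k, l) ∈ A :=
  Nat.of_pred_closed (P := fun l => (k, l) ∈ A) (fun l hl h => (hA.2 k l h).2 hl) hl hlj
    (Nat.of_succ_closed (P := fun k => (k, j) ∈ A) (fun k hk h => (hA.2 k j h).1 hk) hik hkm h)

theorem LRCorner.mem_of_le (hA : LRCorner m n A) (h : (i, j) ∈ A) (hik : i ≤ k) (hkm : k ≤ m)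
    (hjl : j ≤ l) (hln : l ≤ n) : (k, l) ∈ A :=
  Nat.of_succ_closed (P := fun l => (k, l) ∈ A) (fun l hl h => (hA.2 k l h).2 hl) hjl hln
    (Nat.of_succ_closed (P := fun k => (k, j) ∈ A) (fun k hk h => (hA.2 k j h).1 hk) hik hkm h)

end Corners

namespace CornerDecomp

variable {m n a b c d i j k l : ℕ} {T A B C D : Finset (ℕ × ℕ)}

theorem not_mem (h : CornerDecomp m n T A B C D) {x : ℕ × ℕ} (hx : x ∈ A ∪ B ∪ C ∪ D) :
    x ∉ T := by
  obtain ⟨-, -, -, -, -, -, -, -, -, -, hU, -⟩ := h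
  rw [← hU] at hx
  exact (mem_sdiff.1 hx).2

theorem mem_of_not_mem (h : CornerDecomp m n T A B C D) {x : ℕ × ℕ} (hx : x ∈ grid m n)
    (hxT : x ∉ T) : x ∈ A ∨ x ∈ B ∨ x ∈ C ∨ x ∈ D := by
  obtain ⟨-, -, -, -, -, -, -, -, -, -, hU, -⟩ := h
  have hx' := mem_sdiff.2 ⟨hx, hxT⟩
  rw [hU] at hx'
  simpa only [mem_union, or_assoc] using hx'

theorem not_mem_of_ul (h : CornerDecomp m n T A B C D) (hx : (i, j) ∈ A) (hk : 1 ≤ k)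
    (hki : k ≤ i) (hl : 1 ≤ l) (hlj : l ≤ j) : (k, l) ∉ T :=
  h.not_mem (by simp [h.1.mem_of_le hx hk hki hl hlj])

theorem not_mem_of_ur (h : CornerDecomp m n T A B C D) (hx : (i, j) ∈ B) (hk : 1 ≤ k)
    (hki : k ≤ i) (hjl : j ≤ l) (hln : l ≤ n) : (k, l) ∉ T :=
  h.not_mem (by simp [h.2.1.mem_of_le hx hk hki hjl hln])

theorem not_mem_of_ll (h : CornerDecomp m n T A B C D) (hx : (i, j) ∈ C) (hik : i ≤ k)
    (hkm : k ≤ m) (hl : 1 ≤ l) (hlj : l ≤ j) : (k, l) ∉ T :=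
  h.not_mem (by simp [h.2.2.1.mem_of_le hx hik hkm hl hlj])

theorem not_mem_of_lr (h : CornerDecomp m n T A B C D) (hx : (i, j) ∈ D) (hik : i ≤ k)
    (hkm : k ≤ m) (hjl : j ≤ l) (hln : l ≤ n) : (k, l) ∉ T :=
  h.not_mem (by simp [h.2.2.2.1.mem_of_le hx hik hkm hjl hln])

theorem hConvex (h : CornerDecomp m n T A B C D) (hT : T ⊆ grid m n) : HConvex T := by
  intro i k l j hk hl hkj hjl
  by_contra hj
  have := mem_grid.1 (hT hk); have := mem_grid.1 (hT hl)
  rcases h.mem_of_not_mem (mem_grid.2 ⟨by omega, by omega, by omega, by omega⟩) hj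
    with hj | hj | hj | hj
  · exact h.not_mem_of_ul hj (by omega) le_rfl (by omega) hkj hk
  · exact h.not_mem_of_ur hj (by omega) le_rfl hjl (by omega) hl
  · exact h.not_mem_of_ll hj le_rfl (by omega) (by omega) hkj hk
  · exact h.not_mem_of_lr hj le_rfl (by omega) hjl (by omega) hl

theorem vConvex (h : CornerDecomp m n T A B C D) (hT : T ⊆ grid m n) : VConvex T := by
  intro j k l i hk hl hki hil
  by_contra hi
  have := mem_grid.1 (hT hk); have := mem_grid.1 (hT hl)
  rcases h.mem_of_not_mem (mem_grid.2 ⟨by omega, by omega, by omega, by omega⟩) hi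
    with hi | hi | hi | hi
  · exact h.not_mem_of_ul hi (by omega) hki (by omega) le_rfl hk
  · exact h.not_mem_of_ur hi (by omega) hki le_rfl (by omega) hk
  · exact h.not_mem_of_ll hi hil (by omega) (by omega) le_rfl hl
  · exact h.not_mem_of_lr hi hil (by omega) le_rfl (by omega) hl

theorem down_or_right_mem (h : CornerDecomp m n T A B C D) (hT : T ⊆ grid m n) (hab : (a, b) ∈ T)
    (hcd : (c, d) ∈ T) (hac : a < c) (hbd : b ≤ d) :
    (a + 1, b) ∈ T ∨ (b < d ∧ (a, b + 1) ∈ T) := by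
  have ⟨_, _, _, _, _, _, _, _, _, _, _, _, hBC⟩ := h
  have := mem_grid.1 (hT hab); have := mem_grid.1 (hT hcd)
  by_contra! ⟨hdown, hright⟩
  rcases h.mem_of_not_mem (mem_grid.2 ⟨by omega, by omega, by omega, by omega⟩) hdown
    with h' | h' | h' | h'
  · exact h.not_mem_of_ul h' (by omega) (by omega) (by omega) le_rfl hab
  · exact h.not_mem_of_ur h' (by omega) (by omega) le_rfl (by omega) hab
  · rcases hbd.lt_or_eq with hbd | rfl
    · rcases h.mem_of_not_mem (mem_grid.2 ⟨by omega, by omega, by omega, by omega⟩)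
        (hright hbd) with h'' | h'' | h'' | h''
      · exact h.not_mem_of_ul h'' (by omega) le_rfl (by omega) (by omega) hab
      · exact hBC a b h'' h'
      · exact h.not_mem_of_ll h'' le_rfl (by omega) (by omega) (by omega) hab
      · exact h.not_mem_of_lr h'' hac.le (by omega) hbd (by omega) hcd
    · exact h.not_mem_of_ll h' hac (by omega) (by omega) le_rfl hcd
  · exact h.not_mem_of_lr h' hac (by omega) hbd (by omega) hcd

theorem down_or_left_mem (h : CornerDecomp m n T A B C D) (hT : T ⊆ grid m n) (hab : (a, b) ∈ T)
    (hcd : (c, d) ∈ T) (hac : a < c) (hdb : d ≤ b) :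
    (a + 1, b) ∈ T ∨ (d < b ∧ (a, b - 1) ∈ T) := by
  have ⟨_, _, _, _, _, _, _, _, _, _, _, hAD, _⟩ := h
  have := mem_grid.1 (hT hab); have := mem_grid.1 (hT hcd)
  by_contra! ⟨hdown, hleft⟩
  rcases h.mem_of_not_mem (mem_grid.2 ⟨by omega, by omega, by omega, by omega⟩) hdown
    with h' | h' | h' | h'
  · exact h.not_mem_of_ul h' (by omega) (by omega) (by omega) le_rfl hab
  · exact h.not_mem_of_ur h' (by omega) (by omega) le_rfl (by omega) hab
  · exact h.not_mem_of_ll h' hac (by omega) (by omega) hdb hcd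
  · rcases hdb.lt_or_eq with hdb | rfl
    · rcases h.mem_of_not_mem (mem_grid.2 ⟨by omega, by omega, by omega, by omega⟩)
        (hleft hdb) with h'' | h'' | h'' | h''
      · exact hAD a (b - 1) h'' (by rwa [Nat.sub_add_cancel (by omega)])
      · exact h.not_mem_of_ur h'' (by omega) le_rfl (by omega) (by omega) hab
      · exact h.not_mem_of_ll h'' hac.le (by omega) (by omega) (by omega) hcd
      · exact h.not_mem_of_lr h'' le_rfl (by omega) (by omega) (by omega) hab
    · exact h.not_mem_of_lr h' hac (by omega) le_rfl (by omega) hcd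

theorem exists_adj_closer (h : CornerDecomp m n T A B C D) (hT : T ⊆ grid m n)
    (hab : (a, b) ∈ T) (hcd : (c, d) ∈ T) (hac : a ≤ c) (hne : (a, b) ≠ (c, d)) :
    ∃ x ∈ T, Adj (a, b) x ∧ x.1 ≤ c ∧ c - x.1 + Nat.dist x.2 d < c - a + Nat.dist b d := by
  unfold Nat.dist Adj
  rcases hac.lt_or_eq with hac | rfl
  · rcases le_total b d with hbd | hdb
    · rcases h.down_or_right_mem hT hab hcd hac hbd with hx | ⟨hbd, hx⟩
      · exact ⟨_, hx, by dsimp only; omega⟩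
      · exact ⟨_, hx, by dsimp only; omega⟩
    · rcases h.down_or_left_mem hT hab hcd hac hdb with hx | ⟨hdb, hx⟩
      · exact ⟨_, hx, by dsimp only; omega⟩
      · exact ⟨_, hx, by dsimp only; omega⟩
  · have hbd : b ≠ d := fun hbd => hne (hbd ▸ rfl)
    rcases hbd.lt_or_gt with hbd | hdb
    · exact ⟨_, h.hConvex hT a b d (b + 1) hab hcd (by omega) hbd, by dsimp only; omega⟩
    · exact ⟨_, h.hConvex hT a d b (b - 1) hcd hab (by omega) (by omega), by dsimp only; omega⟩

theorem reflTransGen_of_fst_le (h : CornerDecomp m n T A B C D) (hT : T ⊆ grid m n)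
    (hcd : (c, d) ∈ T) :
    ∀ N a b, (a, b) ∈ T → a ≤ c → c - a + Nat.dist b d ≤ N →
      Relation.ReflTransGen (fun x y => x ∈ T ∧ y ∈ T ∧ Adj x y) (a, b) (c, d) := by
  intro N
  induction N with
  | zero =>
    intro a b _ hac hN
    obtain ⟨rfl, rfl⟩ : a = c ∧ b = d := by unfold Nat.dist at hN; omega
    rfl
  | succ N ih =>
    intro a b hab hac hN
    by_cases heq : (a, b) = (c, d)
    · rw [heq]
    obtain ⟨x, hx, hadj, hxc, hlt⟩ := h.exists_adj_closer hT hab hcd hac heq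
    exact .head ⟨hab, hx, hadj⟩ (ih x.1 x.2 hx hxc (by omega))

theorem connectedIn (h : CornerDecomp m n T A B C D) (hT : T ⊆ grid m n) : ConnectedIn T := by
  rintro ⟨a, b⟩ hab ⟨c, d⟩ hcd
  rcases le_total a c with hac | hca
  · exact h.reflTransGen_of_fst_le hT hcd _ a b hab hac le_rfl
  · exact Relation.ReflTransGen.mono (fun _ _ ⟨hy, hx, hyx⟩ => ⟨hx, hy, hyx.symm⟩) _ _
      (Relation.reflTransGen_swap.2 (h.reflTransGen_of_fst_le hT hab _ c d hcd hca le_rfl))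

end CornerDecomp

/-- a nonempty T ⊆ grid is an hv-convex polyomino iff its complement
decomposes into four disjoint corner regions with the diagonal conditions. -/
theorem stmt0 (m n : ℕ) (T : Finset (ℕ × ℕ)) (hT : T ⊆ grid m n) (hne : T.Nonempty) :
    (HConvex T ∧ VConvex T ∧ ConnectedIn T) ↔
      ∃ A B C D : Finset (ℕ × ℕ), CornerDecomp m n T A B C D := by
  constructor
  · rintro ⟨hH, hV, hC⟩
    obtain ⟨p, q, lam, sig, h⟩ := hH.exists_isConvexProfile hT hne hV hC
    exact ⟨_, _, _, _, h.cornerDecomp⟩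
  · rintro ⟨A, B, C, D, h⟩
    exact ⟨h.hConvex hT, h.vConvex hT, h.connectedIn hT⟩
end

section
/- Let T be a realization of (r, c), and let R = I × J be a rectangle with ∑_{i∈I} r_i = ∑_{j∉J} c_j + |I|·|J|. Then R ⊆ T and R⊥ ∩ T = ∅, where R⊥ = Ī × J̄ is the orthogonal rectangle formed by the complementary row and column index sets. -/
/-- rectangle lemma. -/
theorem stmt1 (m n : ℕ) (r c : ℕ → ℕ) (T : Finset (ℕ × ℕ)) (I J : Finset ℕ)
    (hT : T ⊆ grid m n)
    (hrow : ∀ i ∈ Finset.Icc 1 m, rowsum n T i = r i)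
    (hcol : ∀ j ∈ Finset.Icc 1 n, colsum m T j = c j)
    (hI : I ⊆ Finset.Icc 1 m) (hJ : J ⊆ Finset.Icc 1 n)
    (hsum : ∑ i ∈ I, r i = ∑ j ∈ Finset.Icc 1 n \ J, c j + I.card * J.card) :
    I ×ˢ J ⊆ T ∧ Disjoint ((Finset.Icc 1 m \ I) ×ˢ (Finset.Icc 1 n \ J)) T := by
  set ind : ℕ × ℕ → ℕ := fun p => if p ∈ T then 1 else 0 with hind
  have f_def : ∀ (K L : Finset ℕ), ∑ i ∈ K, ∑ j ∈ L, ind (i, j) = ∑ p ∈ K ×ˢ L, ind p := by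
    intro K L; rw [Finset.sum_product]
  -- row side
  have hr : ∑ i ∈ I, r i =
      ∑ i ∈ I, ∑ j ∈ J, ind (i, j) + ∑ i ∈ I, ∑ j ∈ Finset.Icc 1 n \ J, ind (i, j) := by
    rw [← Finset.sum_add_distrib]
    apply Finset.sum_congr rfl
    intro i hi
    rw [← hrow i (hI hi), rowsum]
    rw [Finset.card_filter]
    rw [← Finset.sum_sdiff hJ]
    ring
  -- col side
  have hc : ∑ j ∈ Finset.Icc 1 n \ J, c j =
      ∑ i ∈ I, ∑ j ∈ Finset.Icc 1 n \ J, ind (i, j)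
      + ∑ i ∈ Finset.Icc 1 m \ I, ∑ j ∈ Finset.Icc 1 n \ J, ind (i, j) := by
    rw [add_comm, Finset.sum_sdiff hI, ← Finset.sum_comm]
    apply Finset.sum_congr rfl
    intro j hj
    rw [← hcol j (Finset.mem_sdiff.mp hj).1, colsum, Finset.card_filter]
  have hle : ∑ i ∈ I, ∑ j ∈ J, ind (i, j) ≤ I.card * J.card := by
    rw [f_def, ← Finset.card_product]
    calc ∑ p ∈ I ×ˢ J, ind p ≤ ∑ p ∈ I ×ˢ J, 1 := by
          apply Finset.sum_le_sum; intro p _; simp [hind]; split <;> omega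
      _ = (I ×ˢ J).card := by simp
  have key : ∑ i ∈ I, ∑ j ∈ J, ind (i, j) = I.card * J.card ∧
      ∑ i ∈ Finset.Icc 1 m \ I, ∑ j ∈ Finset.Icc 1 n \ J, ind (i, j) = 0 := by
    constructor <;> omega
  constructor
  · intro p hp
    have h1 : ∀ p ∈ I ×ˢ J, ind p = 1 := by
      have : ∑ p ∈ I ×ˢ J, ind p = ∑ p ∈ I ×ˢ J, 1 := by
        rw [← f_def, key.1]; simp [← Finset.card_product]
      have hmono : ∀ p ∈ I ×ˢ J, ind p ≤ 1 := by
        intro p _; simp only [hind]; split <;> omega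
      exact fun p hp => (Finset.sum_eq_sum_iff_of_le hmono).mp this p hp
    have := h1 p hp
    simp only [hind] at this
    by_contra h; simp [h] at this
  · rw [Finset.disjoint_left]
    intro p hp hpT
    have h0 := Finset.sum_eq_zero_iff.mp key.2
    obtain ⟨hp1, hp2⟩ := Finset.mem_product.mp hp
    have := Finset.sum_eq_zero_iff.mp (h0 p.1 hp1) p.2 hp2
    simp only [hind] at this
    rw [if_pos (by simpa using hpT)] at this
    omega
end

section
/- If A is an upper-left corner region, B an upper-right corner region, C a lower-left corner region, and D a lower-right corner region in the m×n grid, A,B,C,D are pairwise disjoint, (i-1,j-1) ∈ A implies (i,j) ∉ D, and (i-1,j+1) ∈ B implies (i,j) ∉ C, then T = complement of A ∪ B ∪ C ∪ D is h-convex and v-convex. -/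
lemma down_closed (P : ℕ → Prop) (h : ∀ j, P j → 2 ≤ j → P (j - 1)) :
    ∀ j k, P j → 1 ≤ k → k ≤ j → P k := by
  intro j
  induction j with
  | zero => intro k _ hk hkj; omega
  | succ j ih =>
    intro k hP hk hkj
    rcases Nat.eq_or_lt_of_le hkj with rfl | hlt
    · exact hP
    · have h2 : 2 ≤ j + 1 := by omega
      have := h (j + 1) hP h2
      simp only [Nat.add_sub_cancel] at this
      exact ih k this hk (by omega)

lemma up_closed (P : ℕ → Prop) (N : ℕ) (h : ∀ j, P j → j + 1 ≤ N → P (j + 1)) :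
    ∀ j l, P j → j ≤ l → l ≤ N → P l := by
  intro j l
  induction l with
  | zero => intro hP hjl _; exact Nat.le_zero.mp hjl ▸ hP
  | succ l ih =>
    intro hP hjl hlN
    rcases Nat.eq_or_lt_of_le hjl with rfl | hlt
    · exact hP
    · exact h l (ih hP (by omega) (by omega)) hlN

/-- the complement of a disjoint union of four corner regions
satisfying the diagonal conditions is h-convex and v-convex. -/
theorem stmt4 (m n : ℕ) (A B C D : Finset (ℕ × ℕ))
    (hA : ULCorner m n A) (hB : URCorner m n B) (hC : LLCorner m n C) (hD : LRCorner m n D)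
    (hAB : Disjoint A B) (hAC : Disjoint A C) (hAD : Disjoint A D)
    (hBC : Disjoint B C) (hBD : Disjoint B D) (hCD : Disjoint C D)
    (h1 : ∀ i j, (i, j) ∈ A → (i + 1, j + 1) ∉ D)
    (h2 : ∀ i j, (i, j + 1) ∈ B → (i + 1, j) ∉ C) :
    HConvex (grid m n \ (A ∪ B ∪ C ∪ D)) ∧ VConvex (grid m n \ (A ∪ B ∪ C ∪ D)) := by
  constructor
  · intro i k l j hk hl hkj hjl
    simp only [Finset.mem_sdiff, Finset.mem_union] at hk hl ⊢
    obtain ⟨hkg, hkn⟩ := hk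
    obtain ⟨hlg, hln⟩ := hl
    have hkgrid := hkg
    have hlgrid := hlg
    simp only [grid, Finset.mem_product, Finset.mem_Icc] at hkgrid hlgrid
    refine ⟨?_, ?_⟩
    · simp only [grid, Finset.mem_product, Finset.mem_Icc]; omega
    · push_neg at hkn hln ⊢
      refine ⟨⟨⟨?_, ?_⟩, ?_⟩, ?_⟩
      · intro hj
        exact hkn.1.1.1 (down_closed (fun c => (i, c) ∈ A)
          (fun c hc h2 => (hA.2 i c hc).2 h2) j k hj hkgrid.2.1 hkj)
      · intro hj
        exact hln.1.1.2 (up_closed (fun c => (i, c) ∈ B) n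
          (fun c hc h2 => (hB.2 i c hc).2 h2) j l hj hjl hlgrid.2.2)
      · intro hj
        exact hkn.1.2 (down_closed (fun c => (i, c) ∈ C)
          (fun c hc h2 => (hC.2 i c hc).2 h2) j k hj hkgrid.2.1 hkj)
      · intro hj
        exact hln.2 (up_closed (fun c => (i, c) ∈ D) n
          (fun c hc h2 => (hD.2 i c hc).2 h2) j l hj hjl hlgrid.2.2)
  · intro j k l i hk hl hki hil
    simp only [Finset.mem_sdiff, Finset.mem_union] at hk hl ⊢
    obtain ⟨hkg, hkn⟩ := hk
    obtain ⟨hlg, hln⟩ := hl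
    have hkgrid := hkg
    have hlgrid := hlg
    simp only [grid, Finset.mem_product, Finset.mem_Icc] at hkgrid hlgrid
    refine ⟨?_, ?_⟩
    · simp only [grid, Finset.mem_product, Finset.mem_Icc]; omega
    · push_neg at hkn hln ⊢
      refine ⟨⟨⟨?_, ?_⟩, ?_⟩, ?_⟩
      · intro hi
        exact hkn.1.1.1 (down_closed (fun r => (r, j) ∈ A)
          (fun r hr h2 => (hA.2 r j hr).1 h2) i k hi hkgrid.1.1 hki)
      · intro hi
        exact hkn.1.1.2 (down_closed (fun r => (r, j) ∈ B)
          (fun r hr h2 => (hB.2 r j hr).1 h2) i k hi hkgrid.1.1 hki)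
      · intro hi
        exact hln.1.2 (up_closed (fun r => (r, j) ∈ C) m
          (fun r hr h2 => (hC.2 r j hr).1 h2) i l hi hil hlgrid.1.2)
      · intro hi
        exact hln.2 (up_closed (fun r => (r, j) ∈ D) m
          (fun r hr h2 => (hD.2 r j hr).1 h2) i l hi hil hlgrid.1.2)
end

section
/- Let T be an hv-convex polyomino realization of (r,c) anchored at (k,l), i.e., (k,1) ∈ T and (l,n) ∈ T. Define A,B,C,D to be the four corner regions of the complement of T (from the corner decomposition of hv-convex polyominoes). Then for every column j and every i: if (i,j) ∈ A ∪ B then (i + c_j, j) ∉ C ∪ D, and (c_j, j) ∉ C ∪ D (indices out of range are vacuously excluded). -/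
lemma upClosed {m n : ℕ} {A B : Finset (ℕ × ℕ)}
    (hA : ULCorner m n A) (hB : URCorner m n B) :
    ∀ d i j, (i, j) ∈ A ∪ B → 1 ≤ i - d → (i - d, j) ∈ A ∪ B := by
  intro d
  induction d with
  | zero => intro i j h _; simpa using h
  | succ d ih =>
      intro i j h hle
      have h2 : 2 ≤ i - d := by omega
      have h1 : 1 ≤ i - d := by omega
      have hmem := ih i j h h1
      have key : (i - d - 1, j) ∈ A ∪ B := by
        rcases Finset.mem_union.1 hmem with hA' | hB'
        · exact Finset.mem_union_left _ ((hA.2 _ _ hA').1 h2)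
        · exact Finset.mem_union_right _ ((hB.2 _ _ hB').1 h2)
      have : i - (d + 1) = i - d - 1 := by omega
      rw [this]; exact key

lemma downClosed {m n : ℕ} {C D : Finset (ℕ × ℕ)}
    (hC : LLCorner m n C) (hD : LRCorner m n D) :
    ∀ d i j, (i, j) ∈ C ∪ D → i + d ≤ m → (i + d, j) ∈ C ∪ D := by
  intro d
  induction d with
  | zero => intro i j h _; simpa using h
  | succ d ih =>
      intro i j h hle
      have hmem := ih i j h (by omega)
      have hstep : i + d + 1 ≤ m := by omega
      rcases Finset.mem_union.1 hmem with hC' | hD'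
      · exact Finset.mem_union_left _ ((hC.2 _ _ hC').1 hstep)
      · exact Finset.mem_union_right _ ((hD.2 _ _ hD').1 hstep)

/-- soundness of the LBC clauses. -/
theorem stmt9 (m n k l : ℕ) (r c : ℕ → ℕ) (T A B C D : Finset (ℕ × ℕ))
    (hT : HvConvexPolyomino m n T)
    (hrow : ∀ i ∈ Finset.Icc 1 m, rowsum n T i = r i)
    (hcol : ∀ j ∈ Finset.Icc 1 n, colsum m T j = c j)
    (hanch1 : (k, 1) ∈ T) (hanch2 : (l, n) ∈ T)
    (hdec : CornerDecomp m n T A B C D) :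
    (∀ i j, (i, j) ∈ A ∪ B → (i + c j, j) ∉ C ∪ D) ∧
    (∀ j ∈ Finset.Icc 1 n, (c j, j) ∉ C ∪ D) := by
  obtain ⟨hA, hB, hC, hD, hABd, hACd, hADd, hBCd, hBDd, hCDd, hcomp, _, _⟩ := hdec
  obtain ⟨hTg, _, _, _⟩ := hT
  -- membership in AB -> grid bounds
  have hABg : ∀ x ∈ A ∪ B, x ∈ grid m n := by
    intro x hx
    rcases Finset.mem_union.1 hx with h | h
    · exact hA.1 h
    · exact hB.1 h
  have hCDg : ∀ x ∈ C ∪ D, x ∈ grid m n := by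
    intro x hx
    rcases Finset.mem_union.1 hx with h | h
    · exact hC.1 h
    · exact hD.1 h
  -- any cell in A∪B∪C∪D is not in T
  have hnotT : ∀ x : ℕ × ℕ, x ∈ A ∪ B → x ∉ T := by
    intro x hx hxT
    have : x ∈ grid m n \ T := by
      rw [hcomp]
      simp only [Finset.mem_union] at hx ⊢
      tauto
    exact (Finset.mem_sdiff.1 this).2 hxT
  have hnotT' : ∀ x : ℕ × ℕ, x ∈ C ∪ D → x ∉ T := by
    intro x hx hxT
    have : x ∈ grid m n \ T := by
      rw [hcomp]
      simp only [Finset.mem_union] at hx ⊢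
      tauto
    exact (Finset.mem_sdiff.1 this).2 hxT
  have hdisj : ∀ x : ℕ × ℕ, x ∈ A ∪ B → x ∉ C ∪ D := by
    intro x hx hy
    rcases Finset.mem_union.1 hx with h1 | h1 <;> rcases Finset.mem_union.1 hy with h2 | h2
    · exact Finset.disjoint_left.1 hACd h1 h2
    · exact Finset.disjoint_left.1 hADd h1 h2
    · exact Finset.disjoint_left.1 hBCd h1 h2
    · exact Finset.disjoint_left.1 hBDd h1 h2
  constructor
  · intro i j hAB hCD
    rcases Nat.eq_zero_or_pos (c j) with hc0 | hcpos
    · rw [hc0] at hCD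
      exact hdisj _ hAB (by simpa using hCD)
    · -- grid bounds
      have hg1 := hABg _ hAB
      have hg2 := hCDg _ hCD
      simp only [grid, Finset.mem_product, Finset.mem_Icc] at hg1 hg2
      obtain ⟨⟨hi1, _⟩, hj1, hjn⟩ := hg1
      obtain ⟨⟨_, him⟩, _⟩ := hg2
      have hcol' : colsum m T j = c j := hcol j (Finset.mem_Icc.2 ⟨hj1, hjn⟩)
      have hsub : (Finset.Icc 1 m).filter (fun t => (t, j) ∈ T) ⊆
          Finset.Icc (i + 1) (i + c j - 1) := by
        intro t ht
        obtain ⟨htm, htT⟩ := Finset.mem_filter.1 ht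
        rw [Finset.mem_Icc] at htm ⊢
        constructor
        · by_contra hlt
          have hti : t ≤ i := by omega
          have : (i - (i - t), j) ∈ A ∪ B :=
            upClosed hA hB (i - t) i j hAB (by omega)
          have ht' : i - (i - t) = t := by omega
          rw [ht'] at this
          exact hnotT _ this htT
        · by_contra hlt
          have : (i + c j + (t - (i + c j)), j) ∈ C ∪ D :=
            downClosed hC hD (t - (i + c j)) (i + c j) j hCD (by omega)
          have ht' : i + c j + (t - (i + c j)) = t := by omega
          rw [ht'] at this
          exact hnotT' _ this htT
      have hcard := Finset.card_le_card hsub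
      rw [Nat.card_Icc] at hcard
      have : colsum m T j ≤ i + c j - 1 + 1 - (i + 1) := hcard
      omega
  · intro j hj hCD
    have hg2 := hCDg _ hCD
    simp only [grid, Finset.mem_product, Finset.mem_Icc] at hg2
    obtain ⟨⟨hc1, hcm⟩, _⟩ := hg2
    have hcol' : colsum m T j = c j := hcol j hj
    have hsub : (Finset.Icc 1 m).filter (fun t => (t, j) ∈ T) ⊆
        Finset.Icc 1 (c j - 1) := by
      intro t ht
      obtain ⟨htm, htT⟩ := Finset.mem_filter.1 ht
      rw [Finset.mem_Icc] at htm ⊢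
      refine ⟨htm.1, ?_⟩
      by_contra hlt
      have : (c j + (t - c j), j) ∈ C ∪ D :=
        downClosed hC hD (t - c j) (c j) j hCD (by omega)
      have ht' : c j + (t - c j) = t := by omega
      rw [ht'] at this
      exact hnotT' _ this htT
    have hcard := Finset.card_le_card hsub
    rw [Nat.card_Icc] at hcard
    have : colsum m T j ≤ c j - 1 + 1 - 1 := hcard
    omega
end

section
/- Let T be an hv-convex polyomino in the m×n grid with (k,1) ∈ T and (l,n) ∈ T, with corner decomposition of the complement into A,B,C,D. Then for every row i with i ≤ min(k,l) and every column j: if (i,j) ∉ A then (i, j + r_i) ∈ B (or j + r_i > n), where r_i = rowsum_i(T). -/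
lemma mem_grid_iff {m n i j : ℕ} : (i, j) ∈ grid m n ↔ (1 ≤ i ∧ i ≤ m) ∧ (1 ≤ j ∧ j ≤ n) := by
  simp [grid, Finset.mem_product, Finset.mem_Icc]

lemma A_left_closed {m n : ℕ} {A : Finset (ℕ × ℕ)} (hA : ULCorner m n A)
    {i c : ℕ} (hc : 1 ≤ c) : ∀ t, (i, c + t) ∈ A → (i, c) ∈ A := by
  intro t
  induction t with
  | zero => intro h; simpa using h
  | succ t ih =>
    intro h
    apply ih
    have := (hA.2 i (c + t + 1) h).2 (by omega)
    simpa using this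

lemma B_right_closed {m n : ℕ} {B : Finset (ℕ × ℕ)} (hB : URCorner m n B)
    {i c d : ℕ} (h : (i, c) ∈ B) (hcd : c ≤ d) (hd : d ≤ n) : (i, d) ∈ B := by
  obtain ⟨t, rfl⟩ := Nat.exists_eq_add_of_le hcd
  clear hcd
  induction t with
  | zero => simpa using h
  | succ t ih =>
    have h1 : (i, c + t) ∈ B := ih (by omega)
    have := (hB.2 i (c + t) h1).2 (by omega)
    simpa [Nat.add_assoc] using this

lemma C_down_closed {m n : ℕ} {C : Finset (ℕ × ℕ)} (hC : LLCorner m n C)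
    {i i' j : ℕ} (h : (i, j) ∈ C) (hii : i ≤ i') (hm : i' ≤ m) : (i', j) ∈ C := by
  obtain ⟨t, rfl⟩ := Nat.exists_eq_add_of_le hii
  clear hii
  induction t with
  | zero => simpa using h
  | succ t ih =>
    have h1 : (i + t, j) ∈ C := ih (by omega)
    have := (hC.2 (i + t) j h1).1 (by omega)
    simpa [Nat.add_assoc] using this

lemma C_left_closed {m n : ℕ} {C : Finset (ℕ × ℕ)} (hC : LLCorner m n C)
    {i c : ℕ} (hc : 1 ≤ c) : ∀ t, (i, c + t) ∈ C → (i, c) ∈ C := by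
  intro t
  induction t with
  | zero => intro h; simpa using h
  | succ t ih =>
    intro h
    apply ih
    have := (hC.2 i (c + t + 1) h).2 (by omega)
    simpa using this

lemma D_down_closed {m n : ℕ} {D : Finset (ℕ × ℕ)} (hD : LRCorner m n D)
    {i i' j : ℕ} (h : (i, j) ∈ D) (hii : i ≤ i') (hm : i' ≤ m) : (i', j) ∈ D := by
  obtain ⟨t, rfl⟩ := Nat.exists_eq_add_of_le hii
  clear hii
  induction t with
  | zero => simpa using h
  | succ t ih =>
    have h1 : (i + t, j) ∈ D := ih (by omega)
    have := (hD.2 (i + t) j h1).1 (by omega)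
    simpa [Nat.add_assoc] using this

lemma D_right_closed {m n : ℕ} {D : Finset (ℕ × ℕ)} (hD : LRCorner m n D)
    {i c d : ℕ} (h : (i, c) ∈ D) (hcd : c ≤ d) (hd : d ≤ n) : (i, d) ∈ D := by
  obtain ⟨t, rfl⟩ := Nat.exists_eq_add_of_le hcd
  clear hcd
  induction t with
  | zero => simpa using h
  | succ t ih =>
    have h1 : (i, c + t) ∈ D := ih (by omega)
    have := (hD.2 i (c + t) h1).2 (by omega)
    simpa [Nat.add_assoc] using this

/-- soundness of the UBR clauses for rows above both anchors. -/
theorem stmt10 (m n k l : ℕ) (T A B C D : Finset (ℕ × ℕ))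
    (hT : HvConvexPolyomino m n T)
    (hanch1 : (k, 1) ∈ T) (hanch2 : (l, n) ∈ T)
    (hdec : CornerDecomp m n T A B C D) :
    ∀ i j, 1 ≤ i → i ≤ min k l → 1 ≤ j → j ≤ n → (i, j) ∉ A →
      (n < j + rowsum n T i ∨ (i, j + rowsum n T i) ∈ B) := by
  obtain ⟨hTg, hH, hV, hpoly⟩ := hT
  obtain ⟨hA, hB, hC, hD, _, _, _, _, _, _, hunion, _, _⟩ := hdec
  intro i j hi1 hikl hj1 hjn hjA
  have hkm : k ≤ m := ((mem_grid_iff.mp (hTg hanch1)).1).2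
  have hlm : l ≤ m := ((mem_grid_iff.mp (hTg hanch2)).1).2
  have hn1 : 1 ≤ n := ((mem_grid_iff.mp (hTg hanch2)).2).2.trans' ((mem_grid_iff.mp (hTg hanch2)).2).1
  have hmemT : ∀ x ∈ A ∪ B ∪ C ∪ D, x ∉ T := by
    intro x hx
    rw [← hunion] at hx; exact (Finset.mem_sdiff.mp hx).2
  have hcompl : ∀ x, x ∈ grid m n → x ∉ T → x ∈ A ∪ B ∪ C ∪ D := by
    intro x hg ht
    rw [← hunion]; exact Finset.mem_sdiff.mpr ⟨hg, ht⟩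
  -- no cell of row i lies in C
  have hnotC : ∀ c, (i, c) ∉ C := by
    intro c hc
    have hcg := mem_grid_iff.mp (hC.1 hc)
    have h1 : (k, c) ∈ C := C_down_closed hC hc (by omega) hkm
    have h2 : (k, 1) ∈ C := by
      obtain ⟨t, rfl⟩ := Nat.exists_eq_add_of_le hcg.2.1
      exact C_left_closed hC le_rfl t h1
    exact hmemT _ (by simp [Finset.mem_union, h2]) hanch1
  -- no cell of row i lies in D
  have hnotD : ∀ c, (i, c) ∉ D := by
    intro c hc
    have hcg := mem_grid_iff.mp (hD.1 hc)
    have h1 : (l, c) ∈ D := D_down_closed hD hc (by omega) hlm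
    have h2 : (l, n) ∈ D := D_right_closed hD h1 hcg.2.2 le_rfl
    exact hmemT _ (by simp [Finset.mem_union, h2]) hanch2
  -- complement cells of row i are in A ∪ B
  have hrowAB : ∀ c, 1 ≤ c → c ≤ n → (i, c) ∉ T → (i, c) ∈ A ∨ (i, c) ∈ B := by
    intro c h1c hcn ht
    have hg : (i, c) ∈ grid m n := mem_grid_iff.mpr ⟨⟨hi1, by omega⟩, ⟨h1c, hcn⟩⟩
    have := hcompl _ hg ht
    simp only [Finset.mem_union] at this
    rcases this with ((h | h) | h) | h
    · exact Or.inl h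
    · exact Or.inr h
    · exact absurd h (hnotC c)
    · exact absurd h (hnotD c)
  set S := (Finset.Icc 1 n).filter (fun c => (i, c) ∈ T) with hS
  have hr : rowsum n T i = S.card := rfl
  by_cases hSne : S.Nonempty
  · set a := S.min' hSne with ha
    set b := S.max' hSne with hb
    have haS : a ∈ S := S.min'_mem hSne
    have hbS : b ∈ S := S.max'_mem hSne
    have haT : (i, a) ∈ T := (Finset.mem_filter.mp haS).2
    have hbT : (i, b) ∈ T := (Finset.mem_filter.mp hbS).2
    have ha1 : 1 ≤ a := (Finset.mem_Icc.mp (Finset.mem_filter.mp haS).1).1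
    have hbn : b ≤ n := (Finset.mem_Icc.mp (Finset.mem_filter.mp hbS).1).2
    have hab : a ≤ b := S.min'_le b (S.max'_mem hSne)
    have hSeq : S = Finset.Icc a b := by
      ext c
      simp only [hS, Finset.mem_filter, Finset.mem_Icc]
      constructor
      · intro ⟨_, hcT⟩
        exact ⟨S.min'_le c (Finset.mem_filter.mpr ⟨by simpa [Finset.mem_Icc] using ‹1 ≤ c ∧ c ≤ n›, hcT⟩),
               S.le_max' c (Finset.mem_filter.mpr ⟨by simpa [Finset.mem_Icc] using ‹1 ≤ c ∧ c ≤ n›, hcT⟩)⟩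
      · intro ⟨h1, h2⟩
        exact ⟨⟨by omega, by omega⟩, hH i a b c haT hbT h1 h2⟩
    have hcard : S.card = b + 1 - a := by rw [hSeq, Nat.card_Icc]
    -- j ≥ a
    have hja : a ≤ j := by
      by_contra hlt
      push_neg at hlt
      have hjT : (i, j) ∉ T := by
        intro h
        have : j ∈ S := Finset.mem_filter.mpr ⟨Finset.mem_Icc.mpr ⟨hj1, hjn⟩, h⟩
        exact absurd (S.min'_le j this) (by omega)
      rcases hrowAB j hj1 hjn hjT with h | h
      · exact hjA h
      · have : (i, a) ∈ B := B_right_closed hB h (by omega) (by omega)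
        exact hmemT _ (by simp [Finset.mem_union, this]) haT
    by_cases hjr : n < j + rowsum n T i
    · exact Or.inl hjr
    · push_neg at hjr
      right
      have hbig : b < j + rowsum n T i := by
        rw [hr, hcard]; omega
      have hjrT : (i, j + rowsum n T i) ∉ T := by
        intro h
        have : j + rowsum n T i ∈ S := Finset.mem_filter.mpr ⟨Finset.mem_Icc.mpr ⟨by omega, hjr⟩, h⟩
        exact absurd (S.le_max' _ this) (by omega)
      rcases hrowAB _ (by omega) hjr hjrT with h | h
      · have h2 : (i, b) ∈ A := by
          obtain ⟨t, ht⟩ := Nat.exists_eq_add_of_le (le_of_lt hbig)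
          rw [ht] at h
          exact A_left_closed hA (by omega) t h
        exact absurd hbT (hmemT _ (by simp [Finset.mem_union, h2]))
      · exact h
  · -- row empty
    have hr0 : rowsum n T i = 0 := by
      rw [hr, Finset.card_eq_zero.mpr (Finset.not_nonempty_iff_eq_empty.mp hSne)]
    right
    rw [hr0]
    have hjT : (i, j) ∉ T := by
      intro h
      exact hSne ⟨j, Finset.mem_filter.mpr ⟨Finset.mem_Icc.mpr ⟨hj1, hjn⟩, h⟩⟩
    rcases hrowAB j hj1 hjn hjT with h | h
    · exact absurd h hjA
    · simpa using h
end

section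
/- Let T be an hv-convex polyomino with all rows and columns nonempty, r = rowsum(T), and let k be such that (k,1) ∈ T. Let m_1 be the largest index such that r_1 ≤ r_2 ≤ … ≤ r_{m_1} and m_2 the smallest index such that r_{m_2} ≥ r_{m_2+1} ≥ … ≥ r_m. Then there exist rows k', l' with (k',1) ∈ T, (l',n) ∈ T, min(k',l') ≤ m_1 and max(k',l') ≥ m_2. -/
namespace Stmt12Aux

/-- The set of columns of row `t`. -/
def rset (n : ℕ) (T : Finset (ℕ × ℕ)) (t : ℕ) : Finset ℕ :=
  (Finset.Icc 1 n).filter (fun j => (t, j) ∈ T)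

lemma mem_grid' {m n i j : ℕ} (h : (i, j) ∈ grid m n) :
    1 ≤ i ∧ i ≤ m ∧ 1 ≤ j ∧ j ≤ n := by
  simp only [grid, Finset.mem_product, Finset.mem_Icc] at h
  exact ⟨h.1.1, h.1.2, h.2.1, h.2.2⟩

lemma cross {T : Finset (ℕ × ℕ)} {j : ℕ} {a b : ℕ × ℕ}
    (h : Relation.ReflTransGen (fun x y => x ∈ T ∧ y ∈ T ∧ Adj x y) a b)
    (ha : a.2 ≤ j) : j + 1 ≤ b.2 →
    ∃ i, (i, j) ∈ T ∧ (i, j + 1) ∈ T := by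
  induction h with
  | refl => intro hb; omega
  | @tail b c hab hbc ih =>
    intro hb
    obtain ⟨hbT, hcT, hadj⟩ := hbc
    by_cases hb2 : j + 1 ≤ b.2
    · exact ih hb2
    · push_neg at hb2
      obtain ⟨b1, b2⟩ := b
      obtain ⟨c1, c2⟩ := c
      simp only at hb hb2
      rcases hadj with ⟨h1, h2 | h2⟩ | ⟨h1, h2⟩
      · simp only at h1 h2; omega
      · simp only at h1 h2
        have hb2j : b2 = j := by omega
        have hc2j : c2 = j + 1 := by omega
        exact ⟨b1, hb2j ▸ hbT, by rw [← hc2j, h1]; exact hcT⟩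
      · simp only at h1; omega

lemma col_overlap {m n : ℕ} {T : Finset (ℕ × ℕ)}
    (hconn : ConnectedIn T)
    (hcols : ∀ j ∈ Finset.Icc 1 n, ∃ i, (i, j) ∈ T)
    {j : ℕ} (h1 : 1 ≤ j) (h2 : j + 1 ≤ n) :
    ∃ i, (i, j) ∈ T ∧ (i, j + 1) ∈ T := by
  obtain ⟨p, hp⟩ := hcols j (Finset.mem_Icc.mpr ⟨h1, by omega⟩)
  obtain ⟨q, hq⟩ := hcols (j + 1) (Finset.mem_Icc.mpr ⟨by omega, h2⟩)
  exact cross (hconn _ hp _ hq) (le_refl j) (le_refl (j + 1))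

/-- Core lemma, left version: if some row on side `P` reaches column `jstar`,
row `v` (on the other side, separating) misses all columns `≤ jstar`, and no
row on side `P` touches column 1, we get a contradiction. -/
lemma coreL {m n : ℕ} {T : Finset (ℕ × ℕ)}
    (hsub : T ⊆ grid m n) (hV : VConvex T) (hconn : ConnectedIn T)
    (hcols : ∀ j ∈ Finset.Icc 1 n, ∃ i, (i, j) ∈ T)
    (P : ℕ → Prop) (v : ℕ)
    (hbet : ∀ i i', P i' → ¬ P i → (i' ≤ v ∧ v ≤ i) ∨ (i ≤ v ∧ v ≤ i'))
    (jstar : ℕ)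
    (hvrow : ∀ j, j ≤ jstar → (v, j) ∉ T)
    (hcol1 : ∀ i, P i → (i, 1) ∉ T) :
    ∀ j, j ≤ jstar → ∀ i, P i → (i, j) ∈ T → False := by
  intro j
  induction j using Nat.strong_induction_on with
  | _ j ih =>
    intro hjle i hPi hiT
    have hg := mem_grid' (hsub hiT)
    by_cases hj1 : j = 1
    · exact hcol1 i hPi (hj1 ▸ hiT)
    · have hj2 : 2 ≤ j := by omega
      obtain ⟨i0, h0a, h0b⟩ :=
        col_overlap (m := m) hconn hcols (j := j - 1) (by omega) (by omega)
      rw [show j - 1 + 1 = j by omega] at h0b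
      by_cases hP0 : P i0
      · exact ih (j - 1) (by omega) (by omega) i0 hP0 h0a
      · have hvj : (v, j) ∈ T := by
          rcases hbet i0 i hPi hP0 with ⟨h1, h2⟩ | ⟨h1, h2⟩
          · exact hV j i i0 v hiT h0b h1 h2
          · exact hV j i0 i v h0b hiT h1 h2
        exact hvrow j hjle hvj

/-- Core lemma, right version. -/
lemma coreR {m n : ℕ} {T : Finset (ℕ × ℕ)}
    (hsub : T ⊆ grid m n) (hV : VConvex T) (hconn : ConnectedIn T)
    (hcols : ∀ j ∈ Finset.Icc 1 n, ∃ i, (i, j) ∈ T)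
    (P : ℕ → Prop) (v : ℕ)
    (hbet : ∀ i i', P i' → ¬ P i → (i' ≤ v ∧ v ≤ i) ∨ (i ≤ v ∧ v ≤ i'))
    (jstar : ℕ)
    (hvrow : ∀ j, jstar ≤ j → (v, j) ∉ T)
    (hcoln : ∀ i, P i → (i, n) ∉ T) :
    ∀ d j, n - j = d → jstar ≤ j → ∀ i, P i → (i, j) ∈ T → False := by
  intro d
  induction d using Nat.strong_induction_on with
  | _ d ih =>
    intro j hd hjge i hPi hiT
    have hg := mem_grid' (hsub hiT)
    by_cases hjn : j = n
    · exact hcoln i hPi (hjn ▸ hiT)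
    · obtain ⟨i0, h0a, h0b⟩ :=
        col_overlap (m := m) hconn hcols (j := j) (by omega) (by omega)
      by_cases hP0 : P i0
      · exact ih (n - (j + 1)) (by omega) (j + 1) rfl (by omega) i0 hP0 h0b
      · have hvj : (v, j) ∈ T := by
          rcases hbet i0 i hPi hP0 with ⟨h1, h2⟩ | ⟨h1, h2⟩
          · exact hV j i i0 v hiT h0a h1 h2
          · exact hV j i0 i v h0a hiT h1 h2
        exact hvrow j hjge hvj

lemma rset_eq_Icc {n : ℕ} {T : Finset (ℕ × ℕ)} (hH : HConvex T) {t : ℕ}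
    (h : (rset n T t).Nonempty) :
    rset n T t = Finset.Icc ((rset n T t).min' h) ((rset n T t).max' h) := by
  ext j
  simp only [Finset.mem_Icc]
  constructor
  · exact fun hj => ⟨Finset.min'_le _ _ hj, Finset.le_max' _ _ hj⟩
  · rintro ⟨hj1, hj2⟩
    have h1 := Finset.min'_mem _ h
    have h2 := Finset.max'_mem _ h
    have h1' := Finset.mem_Icc.mp (Finset.mem_filter.mp h1).1
    have h2' := Finset.mem_Icc.mp (Finset.mem_filter.mp h2).1
    refine Finset.mem_filter.mpr ⟨Finset.mem_Icc.mpr ⟨by omega, by omega⟩, ?_⟩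
    exact hH t _ _ j (Finset.mem_filter.mp h1).2 (Finset.mem_filter.mp h2).2 hj1 hj2

lemma card_rset {n : ℕ} {T : Finset (ℕ × ℕ)} (hH : HConvex T) {t : ℕ}
    (h : (rset n T t).Nonempty) :
    (rset n T t).card = (rset n T t).max' h + 1 - (rset n T t).min' h := by
  conv_lhs => rw [rset_eq_Icc hH h]
  rw [Nat.card_Icc]

lemma fullrow {m n : ℕ} {T : Finset (ℕ × ℕ)} (hsub : T ⊆ grid m n)
    (hH : HConvex T) (hV : VConvex T) {c : ℕ}
    (hc1 : (c, 1) ∈ T) (hcn : (c, n) ∈ T) {i i' : ℕ}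
    (hii : i ≤ i') (hi'c : i' ≤ c) :
    rowsum n T i ≤ rowsum n T i' := by
  apply Finset.card_le_card
  intro j hj
  simp only [Finset.mem_filter, Finset.mem_Icc] at hj ⊢
  exact ⟨hj.1, hV j i c i' hj.2 (hH c 1 n j hc1 hcn hj.1.1 hj.1.2) hii (by omega)⟩

end Stmt12Aux

/-- the anchors can be chosen with min ≤ m₁ and max ≥ m₂, where m₁
is the largest index with r₁ ≤ … ≤ r_{m₁} and m₂ the smallest index with
r_{m₂} ≥ … ≥ r_m. -/
theorem stmt12 (m n k m₁ m₂ : ℕ) (r : ℕ → ℕ) (T : Finset (ℕ × ℕ))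
    (hT : HvConvexPolyomino m n T)
    (hrows : ∀ i ∈ Finset.Icc 1 m, ∃ j, (i, j) ∈ T)
    (hcols : ∀ j ∈ Finset.Icc 1 n, ∃ i, (i, j) ∈ T)
    (hr : ∀ i ∈ Finset.Icc 1 m, rowsum n T i = r i)
    (hk : (k, 1) ∈ T)
    (hm₁ : m₁ ∈ Finset.Icc 1 m) (hm₂ : m₂ ∈ Finset.Icc 1 m)
    (hm₁mono : ∀ i, 1 ≤ i → i < m₁ → r i ≤ r (i + 1))
    (hm₁max : m₁ = m ∨ r (m₁ + 1) < r m₁)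
    (hm₂mono : ∀ i, m₂ ≤ i → i < m → r (i + 1) ≤ r i)
    (hm₂min : m₂ = 1 ∨ r (m₂ - 1) < r m₂) :
    ∃ k' l', (k', 1) ∈ T ∧ (l', n) ∈ T ∧ min k' l' ≤ m₁ ∧ m₂ ≤ max k' l' := by
  classical
  open Stmt12Aux in
  obtain ⟨hsub, hH, hV, hTne, hconn⟩ := hT
  have hkg := mem_grid' (hsub hk)
  have hm₁' := Finset.mem_Icc.mp hm₁
  have hm₂' := Finset.mem_Icc.mp hm₂
  have hn1 : 1 ≤ n := hkg.2.2.2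
  -- nonempty rows
  have hrne : ∀ t, 1 ≤ t → t ≤ m → (rset n T t).Nonempty := by
    intro t h1 h2
    obtain ⟨j, hj⟩ := hrows t (Finset.mem_Icc.mpr ⟨h1, h2⟩)
    have hg := mem_grid' (hsub hj)
    exact ⟨j, Finset.mem_filter.mpr ⟨Finset.mem_Icc.mpr ⟨hg.2.2.1, hg.2.2.2⟩, hj⟩⟩
  -- row endpoint facts
  have hminT : ∀ t (h : (rset n T t).Nonempty), (t, (rset n T t).min' h) ∈ T := by
    intro t h
    exact (Finset.mem_filter.mp (Finset.min'_mem _ h)).2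
  have hmaxT : ∀ t (h : (rset n T t).Nonempty), (t, (rset n T t).max' h) ∈ T := by
    intro t h
    exact (Finset.mem_filter.mp (Finset.max'_mem _ h)).2
  have hmemrs : ∀ t j, (t, j) ∈ T → j ∈ rset n T t := by
    intro t j hj
    have hg := mem_grid' (hsub hj)
    exact Finset.mem_filter.mpr ⟨Finset.mem_Icc.mpr ⟨hg.2.2.1, hg.2.2.2⟩, hj⟩
  -- Step 1: an anchor at row ≤ m₁ in column 1 or column n
  have step1 : (∃ i, i ≤ m₁ ∧ (i, 1) ∈ T) ∨ (∃ i, i ≤ m₁ ∧ (i, n) ∈ T) := by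
    by_cases hm : m₁ = m
    · exact Or.inl ⟨k, by omega, hk⟩
    · have hdec : r (m₁ + 1) < r m₁ := hm₁max.resolve_left hm
      have hA := hrne m₁ hm₁'.1 hm₁'.2
      have hB := hrne (m₁ + 1) (by omega) (by omega)
      have hcA : rowsum n T m₁ = (rset n T m₁).max' hA + 1 - (rset n T m₁).min' hA :=
        card_rset hH hA
      have hcB : rowsum n T (m₁ + 1)
          = (rset n T (m₁ + 1)).max' hB + 1 - (rset n T (m₁ + 1)).min' hB :=
        card_rset hH hB
      have eA := hr m₁ hm₁
      have eB := hr (m₁ + 1) (Finset.mem_Icc.mpr ⟨by omega, by omega⟩)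
      have hlm1 : (rset n T m₁).min' hA ≤ (rset n T m₁).max' hA :=
        Finset.min'_le _ _ (Finset.max'_mem _ hA)
      have hlm2 : (rset n T (m₁ + 1)).min' hB ≤ (rset n T (m₁ + 1)).max' hB :=
        Finset.min'_le _ _ (Finset.max'_mem _ hB)
      have hsplit : (rset n T m₁).min' hA < (rset n T (m₁ + 1)).min' hB ∨
          (rset n T (m₁ + 1)).max' hB < (rset n T m₁).max' hA := by omega
      rcases hsplit with hL | hR
      · left
        by_contra hno
        push_neg at hno
        refine coreL hsub hV hconn hcols (fun i => i ≤ m₁) (m₁ + 1)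
          (by intro i i' h1 h2; omega) ((rset n T m₁).min' hA) ?_
          (by intro i hi hiT; exact hno i hi hiT)
          ((rset n T m₁).min' hA) le_rfl m₁ le_rfl (hminT m₁ hA)
        intro j hj hjT
        have := Finset.min'_le _ _ (hmemrs (m₁ + 1) j hjT)
        omega
      · right
        by_contra hno
        push_neg at hno
        refine coreR hsub hV hconn hcols (fun i => i ≤ m₁) (m₁ + 1)
          (by intro i i' h1 h2; omega) ((rset n T m₁).max' hA) ?_
          (by intro i hi hiT; exact hno i hi hiT)
          (n - (rset n T m₁).max' hA) ((rset n T m₁).max' hA) rfl le_rfl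
          m₁ le_rfl (hmaxT m₁ hA)
        intro j hj hjT
        have := Finset.le_max' _ _ (hmemrs (m₁ + 1) j hjT)
        omega
  -- Step 2: an anchor at row ≥ m₂ in column 1 or column n
  have step2 : (∃ i, m₂ ≤ i ∧ (i, 1) ∈ T) ∨ (∃ i, m₂ ≤ i ∧ (i, n) ∈ T) := by
    by_cases hm : m₂ = 1
    · exact Or.inl ⟨k, by omega, hk⟩
    · have hdec : r (m₂ - 1) < r m₂ := hm₂min.resolve_left hm
      have hA := hrne m₂ hm₂'.1 hm₂'.2
      have hB := hrne (m₂ - 1) (by omega) (by omega)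
      have hcA : rowsum n T m₂ = (rset n T m₂).max' hA + 1 - (rset n T m₂).min' hA :=
        card_rset hH hA
      have hcB : rowsum n T (m₂ - 1)
          = (rset n T (m₂ - 1)).max' hB + 1 - (rset n T (m₂ - 1)).min' hB :=
        card_rset hH hB
      have eA := hr m₂ hm₂
      have eB := hr (m₂ - 1) (Finset.mem_Icc.mpr ⟨by omega, by omega⟩)
      have hlm1 : (rset n T m₂).min' hA ≤ (rset n T m₂).max' hA :=
        Finset.min'_le _ _ (Finset.max'_mem _ hA)
      have hlm2 : (rset n T (m₂ - 1)).min' hB ≤ (rset n T (m₂ - 1)).max' hB :=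
        Finset.min'_le _ _ (Finset.max'_mem _ hB)
      have hsplit : (rset n T m₂).min' hA < (rset n T (m₂ - 1)).min' hB ∨
          (rset n T (m₂ - 1)).max' hB < (rset n T m₂).max' hA := by omega
      rcases hsplit with hL | hR
      · left
        by_contra hno
        push_neg at hno
        refine coreL hsub hV hconn hcols (fun i => m₂ ≤ i) (m₂ - 1)
          (by intro i i' h1 h2; omega) ((rset n T m₂).min' hA) ?_
          (by intro i hi hiT; exact hno i hi hiT)
          ((rset n T m₂).min' hA) le_rfl m₂ le_rfl (hminT m₂ hA)
        intro j hj hjT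
        have := Finset.min'_le _ _ (hmemrs (m₂ - 1) j hjT)
        omega
      · right
        by_contra hno
        push_neg at hno
        refine coreR hsub hV hconn hcols (fun i => m₂ ≤ i) (m₂ - 1)
          (by intro i i' h1 h2; omega) ((rset n T m₂).max' hA) ?_
          (by intro i hi hiT; exact hno i hi hiT)
          (n - (rset n T m₂).max' hA) ((rset n T m₂).max' hA) rfl le_rfl
          m₂ le_rfl (hmaxT m₂ hA)
        intro j hj hjT
        have := Finset.le_max' _ _ (hmemrs (m₂ - 1) j hjT)
        omega
  -- Step 3: combine
  obtain ⟨l₀, hl₀⟩ := hcols n (Finset.mem_Icc.mpr ⟨hn1, le_rfl⟩)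
  have hl₀g := mem_grid' (hsub hl₀)
  rcases step1 with ⟨i₁, hi₁, hi₁T⟩ | ⟨i₁, hi₁, hi₁T⟩ <;>
    rcases step2 with ⟨i₂, hi₂, hi₂T⟩ | ⟨i₂, hi₂, hi₂T⟩
  · -- both anchors in column 1
    by_cases hc1 : m₂ ≤ i₁
    · exact ⟨i₁, l₀, hi₁T, hl₀, by omega, by omega⟩
    by_cases hc2 : i₂ ≤ m₁
    · exact ⟨i₂, l₀, hi₂T, hl₀, by omega, by omega⟩
    by_cases hc3 : m₂ ≤ l₀
    · exact ⟨i₁, l₀, hi₁T, hl₀, by omega, by omega⟩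
    by_cases hc4 : l₀ ≤ m₁
    · exact ⟨i₂, l₀, hi₂T, hl₀, by omega, by omega⟩
    · exfalso
      have hl1 : (l₀, 1) ∈ T := hV 1 i₁ i₂ l₀ hi₁T hi₂T (by omega) (by omega)
      have hmono := fullrow hsub hH hV hl1 hl₀ (i := m₁) (i' := m₁ + 1)
        (by omega) (by omega)
      have e1 := hr m₁ hm₁
      have e2 := hr (m₁ + 1) (Finset.mem_Icc.mpr ⟨by omega, by omega⟩)
      rcases hm₁max with h | h <;> omega
  · -- column 1 for ≤ m₁, column n for ≥ m₂
    exact ⟨i₁, i₂, hi₁T, hi₂T, by omega, by omega⟩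
  · -- column n for ≤ m₁, column 1 for ≥ m₂
    exact ⟨i₂, i₁, hi₂T, hi₁T, by omega, by omega⟩
  · -- both anchors in column n
    by_cases hc1 : m₂ ≤ i₁
    · exact ⟨k, i₁, hk, hi₁T, by omega, by omega⟩
    by_cases hc2 : i₂ ≤ m₁
    · exact ⟨k, i₂, hk, hi₂T, by omega, by omega⟩
    by_cases hc3 : k ≤ m₁
    · exact ⟨k, i₂, hk, hi₂T, by omega, by omega⟩
    by_cases hc4 : m₂ ≤ k
    · exact ⟨k, i₁, hk, hi₁T, by omega, by omega⟩
    · exfalso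
      have hkn : (k, n) ∈ T := hV n i₁ i₂ k hi₁T hi₂T (by omega) (by omega)
      have hmono := fullrow hsub hH hV hk hkn (i := m₁) (i' := m₁ + 1)
        (by omega) (by omega)
      have e1 := hr m₁ hm₁
      have e2 := hr (m₁ + 1) (Finset.mem_Icc.mpr ⟨by omega, by omega⟩)
      rcases hm₁max with h | h <;> omega
end

section
/- Let r ∈ ℕ^m, c ∈ ℕ^n with all entries positive, ∑ r_i = ∑ c_j, and r_k = n. Suppose X = (t_p,…,t_q) with p ≤ k ≤ q is a valid balanced [p,q]-realization with first and last unsaturated columns α and β. Set I = [p,q] and J = [α,β]. Then ∑_{i∈I} r_i = ∑_{j∉J} c_j + |I|·|J|. -/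
/-- Column sum of the partial object given by rows p..q, where row i occupies
columns [t i, t i + r i - 1]. -/
def colsumX (p q : ℕ) (r t : ℕ → ℕ) (j : ℕ) : ℕ :=
  ((Finset.Icc p q).filter (fun i => t i ≤ j ∧ j < t i + r i)).card

/-- for a valid balanced [p,q]-realization the rectangle identity
∑_{i∈I} r_i = ∑_{j∉J} c_j + |I|·|J| holds for I = [p,q], J = [α,β]. -/
theorem stmt14 (m n k p q α β : ℕ) (r c t : ℕ → ℕ)
    (hp : 1 ≤ p) (hpk : p ≤ k) (hkq : k ≤ q) (hq : q ≤ m)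
    (hrk : r k = n)
    (hrpos : ∀ i ∈ Finset.Icc 1 m, 1 ≤ r i)
    (hcpos : ∀ j ∈ Finset.Icc 1 n, 1 ≤ c j)
    (hsum : ∑ i ∈ Finset.Icc 1 m, r i = ∑ j ∈ Finset.Icc 1 n, c j)
    (hti : ∀ i ∈ Finset.Icc p q, 1 ≤ t i ∧ t i + r i ≤ n + 1)
    (hvc1 : ∀ i, p ≤ i → i < k → t (i + 1) ≤ t i ∧ t i + r i ≤ t (i + 1) + r (i + 1))
    (hvc2 : ∀ i, k < i → i ≤ q → t (i - 1) ≤ t i ∧ t i + r i ≤ t (i - 1) + r (i - 1))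
    (hα : α ∈ Finset.Icc 1 n) (hβ : β ∈ Finset.Icc 1 n)
    (hαuns : colsumX p q r t α < c α) (hβuns : colsumX p q r t β < c β)
    (hfirstlast : ∀ j ∈ Finset.Icc 1 n, colsumX p q r t j < c j → α ≤ j ∧ j ≤ β)
    (hpr1 : min (t p) (t q) ≤ α) (hpr2 : β < max (t p + r p) (t q + r q))
    (hsat : ∀ j ∈ Finset.Icc 1 n, j ∉ Finset.Icc α β → colsumX p q r t j = c j)
    (hbal1 : max (t p) (t q) ≤ α) (hbal2 : β < min (t p + r p) (t q + r q))
    (hvalid : ∀ j, α < j → j < β → colsumX p q r t j ≤ c j) :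
    ∑ i ∈ Finset.Icc p q, r i
      = ∑ j ∈ Finset.Icc 1 n \ Finset.Icc α β, c j
        + (Finset.Icc p q).card * (Finset.Icc α β).card := by
  have hmax1 : t p ≤ α := le_trans (le_max_left _ _) hbal1
  have hmax2 : t q ≤ α := le_trans (le_max_right _ _) hbal1
  have hmin1 : β < t p + r p := lt_of_lt_of_le hbal2 (min_le_left _ _)
  have hmin2 : β < t q + r q := lt_of_lt_of_le hbal2 (min_le_right _ _)
  simp only [Finset.mem_Icc] at hα hβ
  -- every row p..q covers all of [α, β]
  have hcover : ∀ i ∈ Finset.Icc p q, t i ≤ α ∧ β < t i + r i := by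
    intro i hi
    simp only [Finset.mem_Icc] at hi
    rcases le_or_gt i k with hik | hik
    · have key : ∀ d, p + d ≤ k → t (p + d) ≤ t p ∧ t p + r p ≤ t (p + d) + r (p + d) := by
        intro d
        induction d with
        | zero => simp
        | succ d ih =>
          intro hd
          have e : p + (d + 1) = p + d + 1 := rfl
          obtain ⟨h1, h2⟩ := ih (by omega)
          obtain ⟨h3, h4⟩ := hvc1 (p + d) (by omega) (by omega)
          rw [e]
          omega
      obtain ⟨h1, h2⟩ := key (i - p) (by omega)
      have e : p + (i - p) = i := by omega
      rw [e] at h1 h2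
      omega
    · have key : ∀ d, d ≤ q - k → t (q - d) ≤ t q ∧ t q + r q ≤ t (q - d) + r (q - d) := by
        intro d
        induction d with
        | zero => simp
        | succ d ih =>
          intro hd
          have e : q - (d + 1) = q - d - 1 := rfl
          obtain ⟨h1, h2⟩ := ih (by omega)
          obtain ⟨h3, h4⟩ := hvc2 (q - d) (by omega) (by omega)
          rw [e]
          omega
      obtain ⟨h1, h2⟩ := key (q - i) (by omega)
      have e : q - (q - i) = i := by omega
      rw [e] at h1 h2
      omega
  -- on [α, β] each column sum equals the number of rows
  have hcol : ∀ j ∈ Finset.Icc α β, colsumX p q r t j = (Finset.Icc p q).card := by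
    intro j hj
    simp only [Finset.mem_Icc] at hj
    unfold colsumX
    congr 1
    apply Finset.filter_true_of_mem
    intro i hi
    obtain ⟨h1, h2⟩ := hcover i hi
    omega
  -- double counting
  have hdouble : ∑ j ∈ Finset.Icc 1 n, colsumX p q r t j = ∑ i ∈ Finset.Icc p q, r i := by
    unfold colsumX
    simp_rw [Finset.card_filter]
    rw [Finset.sum_comm]
    apply Finset.sum_congr rfl
    intro i hi
    obtain ⟨h1, h2⟩ := hti i hi
    rw [← Finset.card_filter]
    have e : (Finset.Icc 1 n).filter (fun j => t i ≤ j ∧ j < t i + r i)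
        = Finset.Ico (t i) (t i + r i) := by
      ext j
      simp only [Finset.mem_filter, Finset.mem_Icc, Finset.mem_Ico]
      omega
    rw [e, Nat.card_Ico]
    omega
  have hJsub : Finset.Icc α β ⊆ Finset.Icc 1 n :=
    Finset.Icc_subset_Icc hα.1 hβ.2
  have hsplit := Finset.sum_sdiff (f := fun j => colsumX p q r t j) hJsub
  have hout : ∑ j ∈ Finset.Icc 1 n \ Finset.Icc α β, colsumX p q r t j
      = ∑ j ∈ Finset.Icc 1 n \ Finset.Icc α β, c j := by
    apply Finset.sum_congr rfl
    intro j hj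
    rw [Finset.mem_sdiff] at hj
    exact hsat j hj.1 hj.2
  have hin : ∑ j ∈ Finset.Icc α β, colsumX p q r t j
      = (Finset.Icc p q).card * (Finset.Icc α β).card := by
    rw [Finset.sum_congr rfl hcol, Finset.sum_const, smul_eq_mul, mul_comm]
  rw [← hdouble, ← hsplit, hout, hin]
end

section
/- Let X = (t_p,…,t_q) be a balanced partial realization in the centered setting (r_k = n, p ≤ k ≤ q). Then for every j ∈ [α, β], colsum_j(X) = q − p + 1, i.e., every row of X covers every column in the unsaturated interval. -/
/-- in the centered setting, a balanced partial realization covers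
every column of the unsaturated interval with all its rows. -/
theorem stmt16 (m n k p q α β : ℕ) (r c t : ℕ → ℕ)
    (hp : 1 ≤ p) (hpk : p ≤ k) (hkq : k ≤ q) (hq : q ≤ m)
    (hrk : r k = n)
    (hrpos : ∀ i ∈ Finset.Icc 1 m, 1 ≤ r i)
    (hcpos : ∀ j ∈ Finset.Icc 1 n, 1 ≤ c j)
    (hsum : ∑ i ∈ Finset.Icc 1 m, r i = ∑ j ∈ Finset.Icc 1 n, c j)
    (hti : ∀ i ∈ Finset.Icc p q, 1 ≤ t i ∧ t i + r i ≤ n + 1)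
    (hvc1 : ∀ i, p ≤ i → i < k → t (i + 1) ≤ t i ∧ t i + r i ≤ t (i + 1) + r (i + 1))
    (hvc2 : ∀ i, k < i → i ≤ q → t (i - 1) ≤ t i ∧ t i + r i ≤ t (i - 1) + r (i - 1))
    (hα : α ∈ Finset.Icc 1 n) (hβ : β ∈ Finset.Icc 1 n)
    (hαuns : colsumX p q r t α < c α) (hβuns : colsumX p q r t β < c β)
    (hfirstlast : ∀ j ∈ Finset.Icc 1 n, colsumX p q r t j < c j → α ≤ j ∧ j ≤ β)
    (hpr1 : min (t p) (t q) ≤ α) (hpr2 : β < max (t p + r p) (t q + r q))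
    (hsat : ∀ j ∈ Finset.Icc 1 n, j ∉ Finset.Icc α β → colsumX p q r t j = c j)
    (hbal1 : max (t p) (t q) ≤ α) (hbal2 : β < min (t p + r p) (t q + r q)) :
    ∀ j ∈ Finset.Icc α β, colsumX p q r t j = q - p + 1 := by
  have mono1 : ∀ i, p ≤ i → i ≤ k → t i ≤ t p ∧ t p + r p ≤ t i + r i := by
    intro i hpi
    induction i, hpi using Nat.le_induction with
    | base => intro _; omega
    | succ i hpi ih =>
      intro hik
      have h := hvc1 i hpi (by omega)
      have h2 := ih (by omega)
      omega
  have mono2 : ∀ d i, k ≤ i → i + d = q → t i ≤ t q ∧ t q + r q ≤ t i + r i := by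
    intro d
    induction d with
    | zero =>
      intro i _ hi
      have hiq : i = q := by omega
      rw [hiq]
      exact ⟨le_rfl, le_rfl⟩
    | succ d ih =>
      intro i hki hiq
      have h := hvc2 (i + 1) (by omega) (by omega)
      simp only [Nat.add_sub_cancel] at h
      have h2 := ih (i + 1) (by omega) (by omega)
      omega
  intro j hj
  simp only [Finset.mem_Icc] at hj hα hβ
  have hcover : ∀ i ∈ Finset.Icc p q, t i ≤ j ∧ j < t i + r i := by
    intro i hi
    simp only [Finset.mem_Icc] at hi
    rcases le_or_gt i k with hik | hik
    · have h := mono1 i hi.1 hik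
      omega
    · have h := mono2 (q - i) i (by omega) (by omega)
      omega
  unfold colsumX
  rw [Finset.filter_true_of_mem hcover, Nat.card_Icc]
  omega
end

section
/- Let T = (t_1,…,t_m) be a centered hv-convex realization of (r,c) with r_k = n, and let p ≤ k ≤ q with (p,q) ≠ (1,m) and either q = m or r_{p-1} ≥ r_{q+1}. Let X = (t_p,…,t_q) and let α, β be the first and last columns j with |{i ∈ [p,q] : t_i ≤ j < t_i+r_i}| < c_j. Then t_{p-1} = α or t_{p-1} = β − r_{p-1} + 1. -/
/-- in a centered realization, the row extending a [p,q]-window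
(the one with the larger row sum) must start at the first unsaturated column α
or end at the last unsaturated column β. -/
theorem stmt18 (m n k p q α β : ℕ) (r c t : ℕ → ℕ)
    (hp : 2 ≤ p) (hpk : p ≤ k) (hkq : k ≤ q) (hq : q ≤ m)
    (hrk : r k = n)
    (hrpos : ∀ i ∈ Finset.Icc 1 m, 1 ≤ r i)
    (hcpos : ∀ j ∈ Finset.Icc 1 n, 1 ≤ c j)
    (hne : (p, q) ≠ (1, m))
    (hchoice : q = m ∨ r (q + 1) ≤ r (p - 1))
    -- t is a centered hv-convex realization of (r, c):
    (hti : ∀ i ∈ Finset.Icc 1 m, 1 ≤ t i ∧ t i + r i ≤ n + 1)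
    (hvc1 : ∀ i, 1 ≤ i → i < k → t (i + 1) ≤ t i ∧ t i + r i ≤ t (i + 1) + r (i + 1))
    (hvc2 : ∀ i, k < i → i ≤ m → t (i - 1) ≤ t i ∧ t i + r i ≤ t (i - 1) + r (i - 1))
    (hreal : ∀ j ∈ Finset.Icc 1 n, colsumX 1 m r t j = c j)
    -- α and β are the first and last columns unsaturated by rows p..q:
    (hα : α ∈ Finset.Icc 1 n) (hβ : β ∈ Finset.Icc 1 n)
    (hαuns : colsumX p q r t α < c α) (hβuns : colsumX p q r t β < c β)
    (hfirstlast : ∀ j ∈ Finset.Icc 1 n, colsumX p q r t j < c j → α ≤ j ∧ j ≤ β) :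
    t (p - 1) = α ∨ t (p - 1) + r (p - 1) = β + 1 := by
  simp only [Finset.mem_Icc] at hα hβ
  have hrp := hrpos (p-1) (by simp [Finset.mem_Icc]; omega)
  have htp := hti (p-1) (by simp [Finset.mem_Icc]; omega)
  -- nesting towards k from above
  have nest1 : ∀ b, b ≤ k → ∀ a, 1 ≤ a → a ≤ b → t b ≤ t a ∧ t a + r a ≤ t b + r b := by
    intro b
    induction b with
    | zero => intro _ a ha hab; omega
    | succ b ih =>
      intro hbk a ha hab
      rcases Nat.lt_or_ge a (b+1) with h | h
      · have h1 := ih (by omega) a ha (by omega)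
        have h2 := hvc1 b (by omega) (by omega)
        omega
      · have : a = b + 1 := by omega
        subst this; omega
  have nest2 : ∀ b, b ≤ m → ∀ a, k ≤ a → a ≤ b → t a ≤ t b ∧ t b + r b ≤ t a + r a := by
    intro b
    induction b with
    | zero =>
      intro _ a _ hab
      have : a = 0 := by omega
      subst this; omega
    | succ b ih =>
      intro hbm a ha hab
      rcases Nat.lt_or_ge a (b+1) with h | h
      · have h1 := ih (by omega) a ha (by omega)
        have h2 := hvc2 (b+1) (by omega) (by omega)
        simp only [Nat.add_sub_cancel] at h2
        omega
      · have : a = b + 1 := by omega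
        subst this; omega
  -- characterization of unsaturated columns
  have hchar : ∀ j, 1 ≤ j → j ≤ n → (colsumX p q r t j < c j ↔
      ((t (p-1) ≤ j ∧ j < t (p-1) + r (p-1)) ∨
       (q < m ∧ t (q+1) ≤ j ∧ j < t (q+1) + r (q+1)))) := by
    intro j hj1 hjn
    have hc : colsumX 1 m r t j = c j := hreal j (by simp [Finset.mem_Icc]; omega)
    have hsub : (Finset.Icc p q).filter (fun i => t i ≤ j ∧ j < t i + r i) ⊆
        (Finset.Icc 1 m).filter (fun i => t i ≤ j ∧ j < t i + r i) :=
      Finset.filter_subset_filter _ (Finset.Icc_subset_Icc (by omega) (by omega))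
    constructor
    · intro hlt
      rw [← hc] at hlt
      unfold colsumX at hlt
      have hss : (Finset.Icc p q).filter (fun i => t i ≤ j ∧ j < t i + r i) ⊂
          (Finset.Icc 1 m).filter (fun i => t i ≤ j ∧ j < t i + r i) :=
        lt_of_le_of_ne hsub (fun hEq => by rw [hEq] at hlt; omega)
      obtain ⟨i, hi, hni⟩ := Finset.exists_of_ssubset hss
      simp only [Finset.mem_filter, Finset.mem_Icc] at hi hni
      have hni' : ¬ (p ≤ i ∧ i ≤ q) := fun hpq => hni ⟨hpq, hi.2⟩
      by_cases hip : i ≤ p - 1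
      · left
        have := nest1 (p-1) (by omega) i (by omega) hip
        omega
      · right
        have hiq : q + 1 ≤ i := by omega
        have := nest2 i (by omega) (q+1) (by omega) hiq
        refine ⟨by omega, by omega, by omega⟩
    · intro h
      rw [← hc]
      unfold colsumX
      apply Finset.card_lt_card
      rw [Finset.ssubset_iff_of_subset hsub]
      rcases h with ⟨h1, h2⟩ | ⟨hqm, h1, h2⟩
      · refine ⟨p-1, ?_, ?_⟩
        · simp only [Finset.mem_filter, Finset.mem_Icc]
          exact ⟨⟨by omega, by omega⟩, h1, h2⟩
        · simp only [Finset.mem_filter, Finset.mem_Icc]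
          intro hmem; omega
      · refine ⟨q+1, ?_, ?_⟩
        · simp only [Finset.mem_filter, Finset.mem_Icc]
          exact ⟨⟨by omega, by omega⟩, h1, h2⟩
        · simp only [Finset.mem_filter, Finset.mem_Icc]
          intro hmem; omega
  -- t (p-1) and the right end e are unsaturated
  set e := t (p-1) + r (p-1) - 1 with he
  have h1 : colsumX p q r t (t (p-1)) < c (t (p-1)) :=
    (hchar (t (p-1)) (by omega) (by omega)).mpr (Or.inl ⟨le_refl _, by omega⟩)
  have hα1 := hfirstlast (t (p-1)) (by simp [Finset.mem_Icc]; omega) h1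
  have h2 : colsumX p q r t e < c e :=
    (hchar e (by omega) (by omega)).mpr (Or.inl ⟨by omega, by omega⟩)
  have hβ1 := hfirstlast e (by simp [Finset.mem_Icc]; omega) h2
  have hαc := (hchar α hα.1 hα.2).mp hαuns
  have hβc := (hchar β hβ.1 hβ.2).mp hβuns
  rcases hαc with hA | ⟨hqm, hA⟩
  · left; omega
  · rcases hβc with hB | ⟨_, hB⟩
    · right; omega
    · rcases hchoice with h | h
      · omega
      · by_cases hteq : t (p - 1) = α
        · left; exact hteq
        · right; omega
end
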